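/- arXiv:1109.5263 — 13 statements merged into one kernel-verified Lean document; each statement's English description precedes it below -/
import Mathlib

section
/- The set 𝔖₀₀ := {(x₀,y₀) ∈ F × F : x₀^q·y₀ − x₀·y₀^q ∈ 𝔽_q^×, x₀^{q²−1} = −1 and y₀^{q²−1} = −1} is finite and has exactly q(q−1)(q²−1) elements (the same as the order of GL₂(𝔽_q)). -/
open Polynomial Finset

/-- The set `𝔖₀₀` of pairs `(x₀, y₀)` with `x₀^q·y₀ − x₀·y₀^q ∈ 𝔽_q^×` and
`x₀^{q²−1} = y₀^{q²−1} = −1`. -/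
def S00 (q : ℕ) (F : Type*) [Field F] : Set (F × F) :=
  {xy | (xy.1 ^ q * xy.2 - xy.1 * xy.2 ^ q) ^ q = xy.1 ^ q * xy.2 - xy.1 * xy.2 ^ q ∧
    xy.1 ^ q * xy.2 - xy.1 * xy.2 ^ q ≠ 0 ∧
    xy.1 ^ (q ^ 2 - 1) = -1 ∧ xy.2 ^ (q ^ 2 - 1) = -1}

theorem stmt0 (p : ℕ) (hp : p.Prime) (hodd : Odd p) (q : ℕ)
    (hq : ∃ n : ℕ, 0 < n ∧ q = p ^ n)
    (F : Type*) [Field F] [IsAlgClosed F] [CharP F p] :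
    (S00 q F).Finite ∧ (S00 q F).ncard = q * (q - 1) * (q ^ 2 - 1) := by
  classical
  haveI : Fact p.Prime := ⟨hp⟩
  obtain ⟨k, hk, rfl⟩ := hq
  set q := p ^ k with hqdef
  have hq2 : 2 ≤ q := by
    calc 2 ≤ p := hp.two_le
    _ = p ^ 1 := (pow_one p).symm
    _ ≤ p ^ k := Nat.pow_le_pow_right hp.pos hk
  set n : ℕ := q ^ 2 - 1 with hn
  set m : ℕ := q - 1 with hm
  have hqsq : 4 ≤ q ^ 2 := by nlinarith
  have hnpos : 0 < n := by omega
  have hmpos : 0 < m := by omega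
  have hn1 : n + 1 = q ^ 2 := by omega
  have hm1 : m + 1 = q := by omega
  have hnm : n = m * (q + 1) := by
    have hn2 : n + 1 = q * q := by rw [hn1]; exact sq q
    have h2 : (q - 1) * (q + 1) + 1 = q * q := by
      obtain ⟨r, hr⟩ := Nat.exists_eq_add_of_le hq2
      rw [hr]
      have e : 2 + r - 1 = 1 + r := by omega
      rw [e]; ring
    rw [hm]; omega
  -- (q : F) = 0
  have hqF : ((q : ℕ) : F) = 0 := by
    rw [hqdef]; push_cast
    rw [CharP.cast_eq_zero F p, zero_pow (by omega)]
  have hnF : ((n : ℕ) : F) = -1 := by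
    rw [hn, Nat.cast_sub (by omega), Nat.cast_pow, hqF]
    simp [zero_pow]
  have hmF : ((m : ℕ) : F) = -1 := by
    rw [hm, Nat.cast_sub (by omega), hqF]; simp
  have hnF0 : NeZero ((n : ℕ) : F) := ⟨by rw [hnF]; exact neg_ne_zero.mpr one_ne_zero⟩
  have hmF0 : NeZero ((m : ℕ) : F) := ⟨by rw [hmF]; exact neg_ne_zero.mpr one_ne_zero⟩
  obtain ⟨ζ, hζ⟩ := HasEnoughRootsOfUnity.exists_primitiveRoot F n
  obtain ⟨η, hη⟩ := HasEnoughRootsOfUnity.exists_primitiveRoot F m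
  -- the finsets
  set A : Finset F := (nthRoots n (-1 : F)).toFinset with hAdef
  set μ : Finset F := (nthRoots m (1 : F)).toFinset with hμdef
  have hA : ∀ x : F, x ∈ A ↔ x ^ n = -1 := by
    intro x; rw [hAdef, Multiset.mem_toFinset, mem_nthRoots hnpos]
  have hμ : ∀ t : F, t ∈ μ ↔ t ^ m = 1 := by
    intro t; rw [hμdef, Multiset.mem_toFinset, mem_nthRoots hmpos]
  have hA0 : ∀ x : F, x ∈ A → x ≠ 0 := by
    intro x hx h0
    rw [hA, h0, zero_pow hnpos.ne'] at hx
    exact one_ne_zero (neg_eq_zero.mp hx.symm)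
  have cardA : A.card = n := by
    obtain ⟨α, hα⟩ := IsAlgClosed.exists_pow_nat_eq (-1 : F) hnpos
    rw [hAdef, Multiset.toFinset_card_of_nodup
      (hζ.nthRoots_nodup (neg_ne_zero.mpr one_ne_zero)),
      hζ.card_nthRoots, if_pos ⟨α, hα⟩]
  have cardμ : μ.card = m := by
    rw [hμdef, Multiset.toFinset_card_of_nodup hη.nthRoots_one_nodup,
      hη.card_nthRoots_one]
  -- key Frobenius computation
  have key : ∀ x y : F, x ^ n = -1 → y ^ n = -1 →
      (x ^ q * y - x * y ^ q) ^ q = x ^ q * y - x * y ^ q := by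
    intro x y hx hy
    have hx2 : x ^ (q ^ 2) = -x := by
      rw [← hn1, pow_succ, hx, neg_one_mul]
    have hy2 : y ^ (q ^ 2) = -y := by
      rw [← hn1, pow_succ, hy, neg_one_mul]
    have hfrob : (x ^ q * y - x * y ^ q) ^ q
        = (x ^ q * y) ^ q - (x * y ^ q) ^ q := by
      rw [hqdef]; exact sub_pow_char_pow _ _ _
    rw [hfrob, mul_pow, mul_pow, ← pow_mul, ← pow_mul,
      show q * q = q ^ 2 from (sq q).symm, hx2, hy2]
    ring
  -- the "bad" pairs and the full finset
  set B : Finset (F × F) :=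
    (A ×ˢ A).filter (fun z => z.1 ^ q * z.2 - z.1 * z.2 ^ q = 0) with hBdef
  set T : Finset (F × F) :=
    (A ×ˢ A).filter (fun z => ¬ (z.1 ^ q * z.2 - z.1 * z.2 ^ q = 0)) with hTdef
  have hset : S00 q F = ↑T := by
    ext ⟨x, y⟩
    simp only [S00, Set.mem_setOf_eq, hTdef, Finset.coe_filter, Finset.mem_product,
      Set.mem_setOf_eq, Finset.mem_coe, not_not]
    constructor
    · rintro ⟨-, hD0, hx, hy⟩
      exact ⟨⟨(hA x).mpr hx, (hA y).mpr hy⟩, hD0⟩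
    · rintro ⟨⟨hx, hy⟩, hD0⟩
      exact ⟨key x y ((hA x).mp hx) ((hA y).mp hy), hD0, (hA x).mp hx, (hA y).mp hy⟩
  have hB : B = Finset.image (fun z : F × F => (z.1, z.2 * z.1)) (A ×ˢ μ) := by
    ext ⟨x, y⟩
    simp only [hBdef, Finset.mem_filter, Finset.mem_product, Finset.mem_image,
      Prod.mk.injEq, Prod.exists]
    constructor
    · rintro ⟨⟨hx, hy⟩, hD⟩
      have hx0 : x ≠ 0 := hA0 x hx
      have hy0 : y ≠ 0 := hA0 y hy
      refine ⟨x, y / x, ⟨hx, ?_⟩, rfl, div_mul_cancel₀ y hx0⟩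
      rw [hμ]
      have htq : (y / x) ^ q = y / x := by
        rw [div_pow, div_eq_div_iff (pow_ne_zero _ hx0) hx0]
        linear_combination -hD
      have ht0 : y / x ≠ 0 := div_ne_zero hy0 hx0
      have : (y / x) ^ m * (y / x) = 1 * (y / x) := by
        rw [← pow_succ, hm1, htq, one_mul]
      exact mul_right_cancel₀ ht0 this
    · rintro ⟨x', t, hmem, rfl, rfl⟩
      obtain ⟨hx', ht⟩ := hmem
      rw [hμ] at ht
      have htq : t ^ q = t := by rw [← hm1, pow_succ, ht, one_mul]
      refine ⟨⟨hx', ?_⟩, ?_⟩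
      · rw [hA, mul_pow, hnm, pow_mul, ht, one_pow, one_mul, ← hnm,
          (hA x').mp hx']
      · rw [mul_pow, htq]; ring
  have cardB : B.card = n * m := by
    rw [hB, Finset.card_image_of_injOn, Finset.card_product, cardA, cardμ]
    intro a ha b hb hab
    simp only [Finset.coe_product, Set.mem_prod, Finset.mem_coe] at ha hb
    have hab' : (a.1, a.2 * a.1) = (b.1, b.2 * b.1) := hab
    have h1 : a.1 = b.1 := (Prod.ext_iff.mp hab').1
    have h2 : a.2 * a.1 = b.2 * b.1 := (Prod.ext_iff.mp hab').2
    have ha0 : a.1 ≠ 0 := hA0 _ ha.1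
    rw [h1] at h2
    exact Prod.ext h1 (mul_right_cancel₀ (h1 ▸ ha0) h2)
  have cardT : T.card = n * n - n * m := by
    rw [hTdef, Finset.filter_not, Finset.card_sdiff_of_subset (Finset.filter_subset _ _),
      ← hBdef, cardB, Finset.card_product, cardA]
  refine ⟨hset ▸ T.finite_toSet, ?_⟩
  rw [hset, Set.ncard_coe_finset, cardT]
  have hqle : q ≤ q ^ 2 := by nlinarith
  have e1 : n * m ≤ n * n := Nat.mul_le_mul_left _ (show m ≤ n by omega)
  have hnz : (n : ℤ) = (q : ℤ) ^ 2 - 1 := by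
    rw [hn]; push_cast [Nat.cast_sub (by omega : 1 ≤ q ^ 2)]; ring
  have hmz : (m : ℤ) = (q : ℤ) - 1 := by
    rw [hm]; push_cast [Nat.cast_sub (by omega : 1 ≤ q)]; ring
  zify [e1, (by omega : 1 ≤ q), (le_trans (by norm_num) hqsq : 1 ≤ q ^ 2)]
  rw [hnz, hmz]; ring
end

section
/- For any two points (x₀,y₀) and (x₀′,y₀′) of 𝔖₀₀ there exist unique elements a, b, c, d ∈ F with a^q = a, b^q = b, c^q = c, d^q = d such that x₀′ = a·x₀ + c·y₀ and y₀′ = b·x₀ + d·y₀; moreover these unique a, b, c, d satisfy a·d − b·c ≠ 0. (In other words, GL₂(𝔽_q) acts simply transitively on 𝔖₀₀.) -/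
section Moore

variable {F : Type*}

/-- Up to sign, the `2 × 2` Moore determinant `det [[u, v], [u^q, v^q]]`. -/
def moore [CommRing F] (q : ℕ) (u v : F) : F := u ^ q * v - u * v ^ q

section CommRing

variable [CommRing F] {p : ℕ} [ExpChar F p] {n : ℕ} {a c u v w : F}

lemma moore_self (q : ℕ) (u : F) : moore q u u = 0 := by
  unfold moore; ring

lemma moore_swap (q : ℕ) (u v : F) : moore q v u = -moore q u v := by
  unfold moore; ring

lemma moore_mul_add_moore_mul (q : ℕ) (x y x' : F) :
    moore q x' y * x + moore q x x' * y = moore q x y * x' := by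
  unfold moore; ring

lemma pow_pow_eq_neg_of_pow_sq_sub_one_eq_neg_one (hu : u ^ ((p ^ n) ^ 2 - 1) = -1) :
    (u ^ p ^ n) ^ p ^ n = -u := by
  have hq : (p ^ n) ^ 2 ≠ 0 := pow_ne_zero _ (pow_ne_zero _ (expChar_pos F p).ne')
  rw [← pow_mul, ← sq, ← pow_sub_one_mul hq, hu, neg_one_mul]

lemma moore_pow_eq_self (hu : u ^ ((p ^ n) ^ 2 - 1) = -1) (hv : v ^ ((p ^ n) ^ 2 - 1) = -1) :
    moore (p ^ n) u v ^ p ^ n = moore (p ^ n) u v := by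
  rw [moore, sub_pow_expChar_pow, mul_pow, mul_pow, pow_pow_eq_neg_of_pow_sq_sub_one_eq_neg_one hu,
    pow_pow_eq_neg_of_pow_sq_sub_one_eq_neg_one hv]
  ring

lemma moore_linear_left (ha : a ^ p ^ n = a) (hc : c ^ p ^ n = c) :
    moore (p ^ n) (a * u + c * v) w = a * moore (p ^ n) u w + c * moore (p ^ n) v w := by
  rw [moore, add_pow_expChar_pow, mul_pow, mul_pow, ha, hc, moore, moore]
  ring

lemma moore_linear_right (ha : a ^ p ^ n = a) (hc : c ^ p ^ n = c) :
    moore (p ^ n) w (a * u + c * v) = a * moore (p ^ n) w u + c * moore (p ^ n) w v := by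
  rw [moore_swap, moore_linear_left ha hc, moore_swap _ u, moore_swap _ v]
  ring

end CommRing

section Field

variable [Field F] {x y x' : F}

lemma eq_moore_div_mul_add {q : ℕ} (h : moore q x y ≠ 0) :
    x' = moore q x' y / moore q x y * x + moore q x x' / moore q x y * y := by
  rw [div_mul_eq_mul_div, div_mul_eq_mul_div, ← add_div, moore_mul_add_moore_mul,
    mul_div_cancel_left₀ _ h]

variable {p : ℕ} [ExpChar F p] {n : ℕ} {a b c d y' : F}

lemma moore_div_moore_pow_eq_self {u v s t : F} (hu : u ^ ((p ^ n) ^ 2 - 1) = -1)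
    (hv : v ^ ((p ^ n) ^ 2 - 1) = -1) (hs : s ^ ((p ^ n) ^ 2 - 1) = -1)
    (ht : t ^ ((p ^ n) ^ 2 - 1) = -1) :
    (moore (p ^ n) u v / moore (p ^ n) s t) ^ p ^ n = moore (p ^ n) u v / moore (p ^ n) s t := by
  rw [div_pow, moore_pow_eq_self hu hv, moore_pow_eq_self hs ht]

lemma coords_eq_moore_div (h : moore (p ^ n) x y ≠ 0) (ha : a ^ p ^ n = a) (hc : c ^ p ^ n = c)
    (hx' : x' = a * x + c * y) :
    a = moore (p ^ n) x' y / moore (p ^ n) x y ∧ c = moore (p ^ n) x x' / moore (p ^ n) x y := by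
  subst hx'
  have hmoore_left : moore (p ^ n) (a * x + c * y) y = a * moore (p ^ n) x y := by
    rw [moore_linear_left ha hc, moore_self, mul_zero, add_zero]
  have hmoore_right : moore (p ^ n) x (a * x + c * y) = c * moore (p ^ n) x y := by
    rw [moore_linear_right ha hc, moore_self, mul_zero, zero_add]
  exact ⟨eq_div_of_mul_eq h hmoore_left.symm, eq_div_of_mul_eq h hmoore_right.symm⟩

lemma moore_eq_det_mul (ha : a ^ p ^ n = a) (hb : b ^ p ^ n = b) (hc : c ^ p ^ n = c)
    (hd : d ^ p ^ n = d) (hx' : x' = a * x + c * y) (hy' : y' = b * x + d * y) :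
    moore (p ^ n) x' y' = (a * d - b * c) * moore (p ^ n) x y := by
  rw [hx', hy', moore_linear_left ha hc, moore_linear_right hb hd, moore_linear_right hb hd,
    moore_self, moore_self, moore_swap _ y x]
  ring

end Field

end Moore

theorem stmt1_general (p : ℕ) (hp : p.Prime) (q : ℕ)
    (hq : ∃ n : ℕ, 0 < n ∧ q = p ^ n)
    (F : Type*) [Field F] [CharP F p]
    (P P' : F × F) (hP : P ∈ S00 q F) (hP' : P' ∈ S00 q F) :
    (∃! v : F × F × F × F,
      (v.1 ^ q = v.1 ∧ v.2.1 ^ q = v.2.1 ∧ v.2.2.1 ^ q = v.2.2.1 ∧ v.2.2.2 ^ q = v.2.2.2) ∧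
      P'.1 = v.1 * P.1 + v.2.2.1 * P.2 ∧ P'.2 = v.2.1 * P.1 + v.2.2.2 * P.2) ∧
    ∀ a b c d : F, a ^ q = a → b ^ q = b → c ^ q = c → d ^ q = d →
      P'.1 = a * P.1 + c * P.2 → P'.2 = b * P.1 + d * P.2 → a * d - b * c ≠ 0 := by
  obtain ⟨n, -, rfl⟩ := hq
  have : Fact p.Prime := ⟨hp⟩
  obtain ⟨x, y⟩ := P
  obtain ⟨x', y'⟩ := P'
  obtain ⟨-, hW, hx, hy⟩ := hP
  obtain ⟨-, hW', hx', hy'⟩ := hP'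
  set W : F → F → F := moore (p ^ n)
  refine ⟨⟨(W x' y / W x y, W y' y / W x y, W x x' / W x y, W x y' / W x y),
    ⟨⟨moore_div_moore_pow_eq_self hx' hy hx hy, moore_div_moore_pow_eq_self hy' hy hx hy,
        moore_div_moore_pow_eq_self hx hx' hx hy, moore_div_moore_pow_eq_self hx hy' hx hy⟩,
      eq_moore_div_mul_add hW, eq_moore_div_mul_add hW⟩, ?_⟩, ?_⟩
  · rintro ⟨a, b, c, d⟩ ⟨⟨ha, hb, hc, hd⟩, hx'_eq, hy'_eq⟩
    obtain ⟨rfl, rfl⟩ := coords_eq_moore_div hW ha hc hx'_eq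
    obtain ⟨rfl, rfl⟩ := coords_eq_moore_div hW hb hd hy'_eq
    rfl
  · intro a b c d ha hb hc hd hx'_eq hy'_eq hdet
    exact hW' (show moore (p ^ n) x' y' = 0 by
      rw [moore_eq_det_mul ha hb hc hd hx'_eq hy'_eq, hdet, zero_mul])

/-- `GL₂(𝔽_q)` acts simply transitively on `𝔖₀₀`: for any two points of `𝔖₀₀` there are
unique `a, b, c, d ∈ 𝔽_q` carrying the first to the second, and they satisfy `ad − bc ≠ 0`. -/
theorem stmt1 (p : ℕ) (hp : p.Prime) (hodd : Odd p) (q : ℕ)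
    (hq : ∃ n : ℕ, 0 < n ∧ q = p ^ n)
    (F : Type*) [Field F] [IsAlgClosed F] [CharP F p]
    (P P' : F × F) (hP : P ∈ S00 q F) (hP' : P' ∈ S00 q F) :
    (∃! v : F × F × F × F,
      (v.1 ^ q = v.1 ∧ v.2.1 ^ q = v.2.1 ∧ v.2.2.1 ^ q = v.2.2.1 ∧ v.2.2.2 ^ q = v.2.2.2) ∧
      P'.1 = v.1 * P.1 + v.2.2.1 * P.2 ∧ P'.2 = v.2.1 * P.1 + v.2.2.2 * P.2) ∧
    ∀ a b c d : F, a ^ q = a → b ^ q = b → c ^ q = c → d ^ q = d →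
      P'.1 = a * P.1 + c * P.2 → P'.2 = b * P.1 + d * P.2 → a * d - b * c ≠ 0 :=
  stmt1_general p hp q hq F P P' hP hP'
end

section
/- The set Γ := {(a₀,a₁) ∈ F × F : a₀^{q²} = a₀, a₀ ≠ 0, and (a₀^q·a₁ + a₀·a₁^q)^q = a₀^q·a₁ + a₀·a₁^q} is finite and has exactly q²(q²−1) elements. -/
/-!
Since `q` is a power of the characteristic, `x ↦ x ^ q` is additive, and for `a₀ ∈ 𝔽_{q²}`
the defect of `b := a₀ ^ q * a₁ + a₀ * a₁ ^ q` under it is `b ^ q - b = a₀ ^ q * (a₁ ^ q² - a₁)`.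
So for `a₀ ≠ 0` the last condition just says `a₁ ∈ 𝔽_{q²}`, and `Γ = 𝔽_{q²}^× × 𝔽_{q²}`.
Inside the algebraically closed field `F`, `𝔽_{q²}` is the root set of the separable
polynomial `X ^ q² - X`, so it has exactly `q²` elements.
-/

open Polynomial Set

/-- The torus `Γ ≅ (𝒪_E/π²)^×` in coordinates. -/
def GammaSet (q : ℕ) (F : Type*) [Field F] : Set (F × F) :=
  {a | a.1 ^ (q ^ 2) = a.1 ∧ a.1 ≠ 0 ∧
    (a.1 ^ q * a.2 + a.1 * a.2 ^ q) ^ q = a.1 ^ q * a.2 + a.1 * a.2 ^ q}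

section FixedPoints

variable {F : Type*} [Field F] {m : ℕ}

theorem setOf_pow_eq_self_eq_rootSet (hm : 1 < m) :
    {y : F | y ^ m = y} = (X ^ m - X : F[X]).rootSet F := by
  ext y
  simp [mem_rootSet, sub_eq_zero, FiniteField.X_pow_card_sub_X_ne_zero F hm]

theorem finite_setOf_pow_eq_self (hm : 1 < m) : {y : F | y ^ m = y}.Finite := by
  rw [setOf_pow_eq_self_eq_rootSet hm]
  exact rootSet_finite _ F

theorem ncard_setOf_pow_eq_self [IsAlgClosed F] (p : ℕ) [CharP F p] (hpm : p ∣ m) (hm : 1 < m) :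
    {y : F | y ^ m = y}.ncard = m := by
  rw [setOf_pow_eq_self_eq_rootSet hm, ← Nat.card_coe_set_eq, Nat.card_eq_fintype_card,
    card_rootSet_eq_natDegree (galois_poly_separable p m hpm) (IsAlgClosed.splits _),
    FiniteField.X_pow_card_sub_X_natDegree_eq F hm]

end FixedPoints

section Gamma

variable {F : Type*} [Field F] (p : ℕ) [ExpChar F p] (n : ℕ)

theorem frobenius_sub_self_of_pow_sq_eq_self {a b : F} (ha : a ^ (p ^ n) ^ 2 = a) :
    (a ^ p ^ n * b + a * b ^ p ^ n) ^ p ^ n - (a ^ p ^ n * b + a * b ^ p ^ n) =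
      a ^ p ^ n * (b ^ (p ^ n) ^ 2 - b) := by
  have ha' : (a ^ p ^ n) ^ p ^ n = a := by rw [← pow_mul, ← sq, ha]
  rw [add_pow_expChar_pow, mul_pow, mul_pow, ha', ← pow_mul, ← sq]
  ring

theorem gammaSet_eq_prod :
    GammaSet (p ^ n) F =
      ({y : F | y ^ (p ^ n) ^ 2 = y} \ {0}) ×ˢ {y : F | y ^ (p ^ n) ^ 2 = y} := by
  ext ⟨a₀, a₁⟩
  simp only [GammaSet, mem_ofPred_eq, mem_prod, mem_sdiff, mem_singleton_iff, and_assoc]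
  refine and_congr_right fun ha₀ => and_congr_right fun hne => ?_
  rw [← sub_eq_zero, frobenius_sub_self_of_pow_sq_eq_self p n ha₀, mul_eq_zero,
    or_iff_right (pow_ne_zero _ hne), sub_eq_zero]

end Gamma

theorem stmt3_general (p : ℕ) (hp : p.Prime) (q : ℕ)
    (hq : ∃ n : ℕ, 0 < n ∧ q = p ^ n)
    (F : Type*) [Field F] [IsAlgClosed F] [CharP F p] :
    (GammaSet q F).Finite ∧ (GammaSet q F).ncard = q ^ 2 * (q ^ 2 - 1) := by
  obtain ⟨n, hn, rfl⟩ := hq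
  have : Fact p.Prime := ⟨hp⟩
  set R : Set F := {y : F | y ^ (p ^ n) ^ 2 = y}
  have hq2 : 1 < (p ^ n) ^ 2 := Nat.one_lt_pow two_ne_zero (Nat.one_lt_pow hn.ne' hp.one_lt)
  have hR : R.ncard = (p ^ n) ^ 2 :=
    ncard_setOf_pow_eq_self p (dvd_pow (dvd_pow_self p hn.ne') two_ne_zero) hq2
  have h0 : (0 : F) ∈ R := zero_pow (by omega)
  rw [gammaSet_eq_prod p n]
  refine ⟨(finite_setOf_pow_eq_self hq2).sdiff.prod (finite_setOf_pow_eq_self hq2), ?_⟩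
  rw [ncard_prod, ncard_sdiff_singleton_of_mem h0, hR, Nat.mul_comm]

theorem stmt3 (p : ℕ) (hp : p.Prime) (hodd : Odd p) (q : ℕ)
    (hq : ∃ n : ℕ, 0 < n ∧ q = p ^ n)
    (F : Type*) [Field F] [IsAlgClosed F] [CharP F p] :
    (GammaSet q F).Finite ∧ (GammaSet q F).ncard = q ^ 2 * (q ^ 2 - 1) :=
  stmt3_general p hp q hq F
end

section
/- Let x₀, y₀ ∈ F and suppose ξ := x₀^q·y₀ − x₀·y₀^q satisfies ξ^q = ξ and ξ ≠ 0. Then x₀·y₀^{q²} − x₀^{q²}·y₀ = 0 if and only if both x₀^{q²−1} = −1 and y₀^{q²−1} = −1. -/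
/-!
Frobenius turns `ξ = x^q y - x y^q` into `ξ^q = x^{q²} y^q - x^q y^{q²}`, which equals `ξ` by hypothesis.
Writing `a = x^{q²-1}`, `b = y^{q²-1}`, the equation `x y^{q²} = x^{q²} y` says `a = b` (as `x y ≠ 0`),
and then `ξ^q = -a ξ`, so `ξ^q = ξ ≠ 0` forces `a = -1`.
-/

theorem pow_sq_mul_pow_sub_pow_mul_pow_sq {R : Type*} [CommRing R] (p : ℕ) [Fact p.Prime]
    [CharP R p] (n : ℕ) (x y : R) :
    x ^ ((p ^ n) ^ 2) * y ^ p ^ n - x ^ p ^ n * y ^ ((p ^ n) ^ 2) =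
      (x ^ p ^ n * y - x * y ^ p ^ n) ^ p ^ n := by
  rw [sq, pow_mul, pow_mul, sub_pow_char_pow, mul_pow, mul_pow]

theorem mul_pow_sub_pow_mul_eq_zero_iff_of_cross_eq {R : Type*} [CommRing R] [IsDomain R]
    {x y : R} {m k : ℕ} (hm : 1 ≤ m) (hx : x ≠ 0) (hy : y ≠ 0)
    (hcross : x ^ k * y - x * y ^ k ≠ 0)
    (hkey : x ^ m * y ^ k - x ^ k * y ^ m = x ^ k * y - x * y ^ k) :
    x * y ^ m - x ^ m * y = 0 ↔ x ^ (m - 1) = -1 ∧ y ^ (m - 1) = -1 := by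
  obtain ⟨l, rfl⟩ := Nat.exists_eq_add_of_le' hm
  simp only [Nat.add_sub_cancel, pow_succ] at hkey ⊢
  constructor
  · intro h
    have hab : y ^ l = x ^ l := by
      have : (y ^ l - x ^ l) * (x * y) = 0 := by linear_combination h
      exact sub_eq_zero.1 ((mul_eq_zero.1 this).resolve_right (mul_ne_zero hx hy))
    rw [hab] at hkey ⊢
    have : (x ^ l + 1) * (x ^ k * y - x * y ^ k) = 0 := by linear_combination -hkey
    have ha : x ^ l = -1 := eq_neg_of_add_eq_zero_left ((mul_eq_zero.1 this).resolve_right hcross)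
    exact ⟨ha, ha⟩
  · rintro ⟨hxl, hyl⟩
    rw [hxl, hyl]
    ring

theorem stmt5_general (p : ℕ) (hp : p.Prime) (q : ℕ)
    (hq : ∃ n : ℕ, 0 < n ∧ q = p ^ n)
    (F : Type*) [Field F] [CharP F p]
    (x₀ y₀ : F) (ξ : F) (hξdef : ξ = x₀ ^ q * y₀ - x₀ * y₀ ^ q)
    (hξ : ξ ^ q = ξ) (hξ0 : ξ ≠ 0) :
    x₀ * y₀ ^ (q ^ 2) - x₀ ^ (q ^ 2) * y₀ = 0 ↔
      x₀ ^ (q ^ 2 - 1) = -1 ∧ y₀ ^ (q ^ 2 - 1) = -1 := by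
  obtain ⟨n, -, rfl⟩ := hq
  have : Fact p.Prime := ⟨hp⟩
  subst hξdef
  have hq0 : p ^ n ≠ 0 := pow_ne_zero _ hp.ne_zero
  have hx : x₀ ≠ 0 := by rintro rfl; simp [zero_pow hq0] at hξ0
  have hy : y₀ ≠ 0 := by rintro rfl; simp [zero_pow hq0] at hξ0
  refine mul_pow_sub_pow_mul_eq_zero_iff_of_cross_eq
    (Nat.one_le_iff_ne_zero.2 (pow_ne_zero 2 hq0)) hx hy hξ0 ?_
  rw [pow_sq_mul_pow_sub_pow_mul_pow_sq, hξ]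

/-- `x₀y₀^{q²} − x₀^{q²}y₀ = 0` iff `x₀^{q²−1} = −1` and `y₀^{q²−1} = −1`. -/
theorem stmt5 (p : ℕ) (hp : p.Prime) (hodd : Odd p) (q : ℕ)
    (hq : ∃ n : ℕ, 0 < n ∧ q = p ^ n)
    (F : Type*) [Field F] [IsAlgClosed F] [CharP F p]
    (x₀ y₀ : F) (ξ : F) (hξdef : ξ = x₀ ^ q * y₀ - x₀ * y₀ ^ q)
    (hξ : ξ ^ q = ξ) (hξ0 : ξ ≠ 0) :
    x₀ * y₀ ^ (q ^ 2) - x₀ ^ (q ^ 2) * y₀ = 0 ↔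
      x₀ ^ (q ^ 2 - 1) = -1 ∧ y₀ ^ (q ^ 2 - 1) = -1 :=
  stmt5_general p hp q hq F x₀ y₀ ξ hξdef hξ hξ0
end

section
/- Let x₀, y₀ ∈ F with x₀^{q²−1} = −1, y₀^{q²−1} = −1, and suppose ξ := x₀^q·y₀ − x₀·y₀^q satisfies ξ^q = ξ and ξ ≠ 0. Then the map L : F × F → F × F, L(x₁,y₁) = (y₀^q·x₁ − x₀^q·y₁, −ξ⁻¹·(x₀·y₁ − x₁·y₀)), is a bijection, and for all (x₁,y₁) ∈ F × F one has (x₁·y₀^q + x₀·y₁^q − x₀^q·y₁ − x₁^q·y₀)^q = x₁·y₀^q + x₀·y₁^q − x₀^q·y₁ − x₁^q·y₀ if and only if the first coordinate s₀ = y₀^q·x₁ − x₀^q·y₁ of L(x₁,y₁) satisfies s₀^{q²} = s₀. (Hence the fiber of the fibration κ over a point of 𝔖₀₀ is identified with 𝔽_{q²} × 𝔸¹.) -/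
/-!
The map `L` is `F`-linear with determinant `ξ⁻¹ (x₀^q y₀ - x₀ y₀^q) = 1`, hence bijective.
For the second part put `s = y₀^q x₁ - x₀^q y₁`. Since `x₀^{q²} = -x₀` and `y₀^{q²} = -y₀`,
Frobenius gives `s^q = x₀ y₁^q - x₁^q y₀`, so the expression in question is the trace-like
sum `s + s^q`, and `(s + s^q)^q = s^q + s^{q²}` equals `s + s^q` exactly when `s^{q²} = s`.
-/

theorem bijective_of_two_by_two_det_ne_zero {K : Type*} [Field K] (a b c d : K)
    (hdet : a * d - b * c ≠ 0) :
    Function.Bijective (fun z : K × K => (a * z.1 + b * z.2, c * z.1 + d * z.2)) := by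
  refine Function.bijective_iff_has_inverse.mpr
    ⟨fun w => ((a * d - b * c)⁻¹ * (d * w.1 - b * w.2), (a * d - b * c)⁻¹ * (a * w.2 - c * w.1)),
      fun z => Prod.ext ?_ ?_, fun w => Prod.ext ?_ ?_⟩
  · linear_combination z.1 * inv_mul_cancel₀ hdet
  · linear_combination z.2 * inv_mul_cancel₀ hdet
  · linear_combination w.1 * mul_inv_cancel₀ hdet
  · linear_combination w.2 * mul_inv_cancel₀ hdet

theorem pow_eq_neg_self_of_pow_sub_one_eq_neg_one {M : Type*} [Monoid M] [HasDistribNeg M]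
    {x : M} {m : ℕ} (hm : 0 < m) (h : x ^ (m - 1) = -1) : x ^ m = -x := by
  rw [← Nat.sub_add_cancel hm, pow_succ, h, neg_one_mul]

section Frobenius

variable {R : Type*} [CommRing R] (p : ℕ) [ExpChar R p] (n : ℕ)

theorem add_pow_expChar_pow_eq_self_iff (s : R) :
    (s + s ^ p ^ n) ^ p ^ n = s + s ^ p ^ n ↔ s ^ (p ^ n) ^ 2 = s := by
  rw [add_pow_expChar_pow, ← pow_mul, ← sq]
  constructor <;> intro h <;> linear_combination h

theorem sub_mul_pow_expChar_pow_of_pow_sq_eq_neg {x₀ y₀ : R}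
    (hx : x₀ ^ (p ^ n) ^ 2 = -x₀) (hy : y₀ ^ (p ^ n) ^ 2 = -y₀) (x₁ y₁ : R) :
    (y₀ ^ p ^ n * x₁ - x₀ ^ p ^ n * y₁) ^ p ^ n = x₀ * y₁ ^ p ^ n - x₁ ^ p ^ n * y₀ := by
  rw [sub_pow_expChar_pow, mul_pow, mul_pow, ← pow_mul, ← pow_mul, ← sq, hx, hy]
  ring

end Frobenius

theorem stmt6_general (p : ℕ) (hp : p.Prime) (q : ℕ)
    (hq : ∃ n : ℕ, 0 < n ∧ q = p ^ n)
    (F : Type*) [Field F] [CharP F p]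
    (x₀ y₀ : F) (hx : x₀ ^ (q ^ 2 - 1) = -1) (hy : y₀ ^ (q ^ 2 - 1) = -1)
    (ξ : F) (hξdef : ξ = x₀ ^ q * y₀ - x₀ * y₀ ^ q) (hξ0 : ξ ≠ 0) :
    Function.Bijective (fun z : F × F =>
      ((y₀ ^ q * z.1 - x₀ ^ q * z.2, -(ξ⁻¹ * (x₀ * z.2 - z.1 * y₀))) : F × F)) ∧
    ∀ x₁ y₁ : F,
      ((x₁ * y₀ ^ q + x₀ * y₁ ^ q - x₀ ^ q * y₁ - x₁ ^ q * y₀) ^ q =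
          x₁ * y₀ ^ q + x₀ * y₁ ^ q - x₀ ^ q * y₁ - x₁ ^ q * y₀ ↔
        (y₀ ^ q * x₁ - x₀ ^ q * y₁) ^ (q ^ 2) = y₀ ^ q * x₁ - x₀ ^ q * y₁) := by
  obtain ⟨n, -, rfl⟩ := hq
  have : Fact p.Prime := ⟨hp⟩
  refine ⟨?_, fun x₁ y₁ => ?_⟩
  · have hdet : y₀ ^ p ^ n * -(ξ⁻¹ * x₀) - -x₀ ^ p ^ n * (ξ⁻¹ * y₀) = 1 := by
      linear_combination ξ⁻¹ * hξdef.symm + inv_mul_cancel₀ hξ0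
    convert bijective_of_two_by_two_det_ne_zero _ _ _ _ (hdet ▸ one_ne_zero) using 1
    funext z
    ext <;> ring
  · have hq2 : 0 < (p ^ n) ^ 2 := pow_pos (pow_pos hp.pos n) 2
    have hconj := sub_mul_pow_expChar_pow_of_pow_sq_eq_neg p n
      (pow_eq_neg_self_of_pow_sub_one_eq_neg_one hq2 hx)
      (pow_eq_neg_self_of_pow_sub_one_eq_neg_one hq2 hy) x₁ y₁
    have htrace : x₁ * y₀ ^ p ^ n + x₀ * y₁ ^ p ^ n - x₀ ^ p ^ n * y₁ - x₁ ^ p ^ n * y₀ =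
        (y₀ ^ p ^ n * x₁ - x₀ ^ p ^ n * y₁) + (y₀ ^ p ^ n * x₁ - x₀ ^ p ^ n * y₁) ^ p ^ n := by
      rw [hconj]; ring
    rw [htrace]
    exact add_pow_expChar_pow_eq_self_iff p n _

/-- The change of coordinates `(x₁, y₁) ↦ (s₀, s₁)` on the fiber is a bijection, and the
`𝔽_q`-rationality condition on the fiber corresponds to `s₀ ∈ 𝔽_{q²}`. -/
theorem stmt6 (p : ℕ) (hp : p.Prime) (hodd : Odd p) (q : ℕ)
    (hq : ∃ n : ℕ, 0 < n ∧ q = p ^ n)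
    (F : Type*) [Field F] [IsAlgClosed F] [CharP F p]
    (x₀ y₀ : F) (hx : x₀ ^ (q ^ 2 - 1) = -1) (hy : y₀ ^ (q ^ 2 - 1) = -1)
    (ξ : F) (hξdef : ξ = x₀ ^ q * y₀ - x₀ * y₀ ^ q) (hξ : ξ ^ q = ξ) (hξ0 : ξ ≠ 0) :
    Function.Bijective (fun z : F × F =>
      ((y₀ ^ q * z.1 - x₀ ^ q * z.2, -(ξ⁻¹ * (x₀ * z.2 - z.1 * y₀))) : F × F)) ∧
    ∀ x₁ y₁ : F,
      ((x₁ * y₀ ^ q + x₀ * y₁ ^ q - x₀ ^ q * y₁ - x₁ ^ q * y₀) ^ q =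
          x₁ * y₀ ^ q + x₀ * y₁ ^ q - x₀ ^ q * y₁ - x₁ ^ q * y₀ ↔
        (y₀ ^ q * x₁ - x₀ ^ q * y₁) ^ (q ^ 2) = y₀ ^ q * x₁ - x₀ ^ q * y₁) :=
  stmt6_general p hp q hq F x₀ y₀ hx hy ξ hξdef hξ0
end

section
/- Let x₀, y₀ ∈ F with x₀^{q²} = −x₀ and y₀^{q²} = −y₀, and let a₀, a₁, b₀, b₁, c₀, c₁, d₀, d₁ ∈ F each satisfy t^q = t. Assume a₀·d₀ − b₀·c₀ = 1 and a₀·d₁ + a₁·d₀ − b₀·c₁ − b₁·c₀ = 0 (i.e. the matrix with entries a₀+a₁π, b₀+b₁π, c₀+c₁π, d₀+d₁π lies in SL₂(𝔽_q[π]/(π²))). Then f := (a₁·x₀ + c₁·y₀)·(b₀·x₀ + d₀·y₀)^q − (a₀·x₀ + c₀·y₀)^q·(b₁·x₀ + d₁·y₀) satisfies f^q + f = 0. -/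
/-- If `g ∈ SL₂(𝔽_q[π]/π²)`, then `f(i, g)` satisfies `f^q + f = 0`. -/
theorem stmt8 (p : ℕ) (hp : p.Prime) (hodd : Odd p) (q : ℕ)
    (hq : ∃ n : ℕ, 0 < n ∧ q = p ^ n)
    (F : Type*) [Field F] [IsAlgClosed F] [CharP F p]
    (x₀ y₀ : F) (hx : x₀ ^ (q ^ 2) = -x₀) (hy : y₀ ^ (q ^ 2) = -y₀)
    (a₀ a₁ b₀ b₁ c₀ c₁ d₀ d₁ : F)
    (ha₀ : a₀ ^ q = a₀) (ha₁ : a₁ ^ q = a₁) (hb₀ : b₀ ^ q = b₀) (hb₁ : b₁ ^ q = b₁)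
    (hc₀ : c₀ ^ q = c₀) (hc₁ : c₁ ^ q = c₁) (hd₀ : d₀ ^ q = d₀) (hd₁ : d₁ ^ q = d₁)
    (hdet0 : a₀ * d₀ - b₀ * c₀ = 1)
    (hdet1 : a₀ * d₁ + a₁ * d₀ - b₀ * c₁ - b₁ * c₀ = 0) :
    ((a₁ * x₀ + c₁ * y₀) * (b₀ * x₀ + d₀ * y₀) ^ q -
        (a₀ * x₀ + c₀ * y₀) ^ q * (b₁ * x₀ + d₁ * y₀)) ^ q +
      ((a₁ * x₀ + c₁ * y₀) * (b₀ * x₀ + d₀ * y₀) ^ q -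
        (a₀ * x₀ + c₀ * y₀) ^ q * (b₁ * x₀ + d₁ * y₀)) = 0 := by
  haveI : Fact p.Prime := ⟨hp⟩
  obtain ⟨n, hn, rfl⟩ := hq
  have hadd : ∀ u v : F, (u + v) ^ p ^ n = u ^ p ^ n + v ^ p ^ n := fun u v =>
    add_pow_char_pow u v p n
  have hsub : ∀ u v : F, (u - v) ^ p ^ n = u ^ p ^ n - v ^ p ^ n := by
    intro u v
    rw [sub_eq_add_neg, hadd, neg_pow, Odd.neg_one_pow, neg_one_mul, ← sub_eq_add_neg]
    exact hodd.pow
  -- abbreviate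
  set q := p ^ n with hqdef
  have hx' : (x₀ ^ q) ^ q = -x₀ := by rw [← pow_mul, ← sq, hx]
  have hy' : (y₀ ^ q) ^ q = -y₀ := by rw [← pow_mul, ← sq, hy]
  have e1 : (a₀ * x₀ + c₀ * y₀) ^ q = a₀ * x₀ ^ q + c₀ * y₀ ^ q := by
    rw [hadd, mul_pow, mul_pow, ha₀, hc₀]
  have e2 : (b₀ * x₀ + d₀ * y₀) ^ q = b₀ * x₀ ^ q + d₀ * y₀ ^ q := by
    rw [hadd, mul_pow, mul_pow, hb₀, hd₀]
  have e3 : (a₁ * x₀ + c₁ * y₀) ^ q = a₁ * x₀ ^ q + c₁ * y₀ ^ q := by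
    rw [hadd, mul_pow, mul_pow, ha₁, hc₁]
  have e4 : (b₁ * x₀ + d₁ * y₀) ^ q = b₁ * x₀ ^ q + d₁ * y₀ ^ q := by
    rw [hadd, mul_pow, mul_pow, hb₁, hd₁]
  have e2' : ((b₀ * x₀ + d₀ * y₀) ^ q) ^ q = -(b₀ * x₀ + d₀ * y₀) := by
    rw [e2, hadd, mul_pow, mul_pow, hb₀, hd₀, hx', hy']; ring
  have e1' : ((a₀ * x₀ + c₀ * y₀) ^ q) ^ q = -(a₀ * x₀ + c₀ * y₀) := by
    rw [e1, hadd, mul_pow, mul_pow, ha₀, hc₀, hx', hy']; ring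
  rw [hsub, mul_pow, mul_pow, ← pow_mul, mul_comm q q, pow_mul, e2', e1', e3, e4, e1, e2]
  linear_combination (y₀ ^ q * x₀ - x₀ ^ q * y₀) * hdet1
end

section
/- Let g ∈ GL₂(R). Then φ(g)·g⁻¹ belongs to the set U·v, where U is the group of upper unitriangular 2×2 matrices over R and v is the matrix with rows (0, 1) and (−1, 0), if and only if there exist 𝐱, 𝐲 ∈ R such that g is the matrix with rows (−φ(𝐱), −φ(𝐲)) and (𝐱, 𝐲), and the determinant of g is fixed by φ (equivalently, det g is a unit of the subring R₀ = {a₀ + a₁ε : a₀^q = a₀, a₁^q = a₁} corresponding to (𝒪_F/π²)^×). -/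
open TrivSqZeroExt

/-- The Frobenius-on-coefficients endomorphism `φ` of the dual numbers `R = F[ε]/(ε²)`,
sending `a₀ + a₁ε` to `a₀^q + a₁^q·ε`. -/
def frobD (q : ℕ) {F : Type*} [CommRing F] (x : DualNumber F) : DualNumber F :=
  TrivSqZeroExt.inl (TrivSqZeroExt.fst x ^ q) + TrivSqZeroExt.inr (TrivSqZeroExt.snd x ^ q)


lemma fst_frobD (q : ℕ) {F : Type*} [CommRing F] (x : DualNumber F) :
    (frobD q x).fst = x.fst ^ q := by simp [frobD]

lemma snd_frobD (q : ℕ) {F : Type*} [CommRing F] (x : DualNumber F) :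
    (frobD q x).snd = x.snd ^ q := by simp [frobD]

def frobRH (p n : ℕ) (F : Type*) [CommRing F] [Fact p.Prime] [CharP F p] :
    DualNumber F →+* DualNumber F where
  toFun := frobD (p ^ n)
  map_one' := by
    have hq : p ^ n ≠ 0 := pow_ne_zero _ (Fact.out (p := p.Prime)).ne_zero
    ext <;> simp [fst_frobD, snd_frobD, zero_pow hq]
  map_mul' x y := by
    show frobD (p ^ n) (x * y) = frobD (p ^ n) x * frobD (p ^ n) y
    ext
    · simp [fst_frobD, snd_frobD, mul_pow]
    · rw [snd_frobD, snd_mul, snd_mul, fst_frobD, fst_frobD, snd_frobD, snd_frobD]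
      simp only [smul_eq_mul, op_smul_eq_mul]
      rw [add_pow_char_pow]
      ring
  map_zero' := by
    have hq : p ^ n ≠ 0 := pow_ne_zero _ (Fact.out (p := p.Prime)).ne_zero
    ext <;> simp [fst_frobD, snd_frobD, zero_pow hq]
  map_add' x y := by
    show frobD (p ^ n) (x + y) = frobD (p ^ n) x + frobD (p ^ n) y
    ext <;> simp [fst_frobD, snd_frobD, add_pow_char_pow]

/-- `φ(g)g⁻¹ ∈ Uv` iff `g` has rows `(−φ(𝐱), −φ(𝐲))`, `(𝐱, 𝐲)` and `det g` is fixed by `φ`. -/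
theorem stmt9 (p : ℕ) (hp : p.Prime) (hodd : Odd p) (q : ℕ)
    (hq : ∃ n : ℕ, 0 < n ∧ q = p ^ n)
    (F : Type*) [Field F] [IsAlgClosed F] [CharP F p]
    (g : Matrix.GeneralLinearGroup (Fin 2) (DualNumber F)) :
    (∃ c : DualNumber F,
        ((g : Matrix (Fin 2) (Fin 2) (DualNumber F)).map (frobD q)) *
            ((g⁻¹ : Matrix.GeneralLinearGroup (Fin 2) (DualNumber F)) :
              Matrix (Fin 2) (Fin 2) (DualNumber F)) =
          !![1, c; 0, 1] * !![0, 1; -1, 0]) ↔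
    (∃ x y : DualNumber F,
        (g : Matrix (Fin 2) (Fin 2) (DualNumber F)) = !![-(frobD q x), -(frobD q y); x, y] ∧
        frobD q ((g : Matrix (Fin 2) (Fin 2) (DualNumber F)).det) =
          (g : Matrix (Fin 2) (Fin 2) (DualNumber F)).det) := by
  obtain ⟨n, hn, rfl⟩ := hq
  haveI := Fact.mk hp
  have hφ : (frobD (p ^ n) : DualNumber F → DualNumber F) = ⇑(frobRH p n F) := rfl
  rw [hφ]
  set φ := frobRH p n F with hφdef
  set M : Matrix (Fin 2) (Fin 2) (DualNumber F) := ↑g with hMdef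
  set N : Matrix (Fin 2) (Fin 2) (DualNumber F) := ↑(g⁻¹) with hNdef
  have hMN : M * N = 1 := g.mul_inv
  have hNM : N * M = 1 := g.inv_mul
  have key : ∀ K : Matrix (Fin 2) (Fin 2) (DualNumber F),
      (M.map ⇑φ * N = K ↔ M.map ⇑φ = K * M) := by
    intro K
    constructor
    · intro h
      have h2 := congrArg (· * M) h
      simpa [Matrix.mul_assoc, hNM] using h2
    · intro h
      rw [h, Matrix.mul_assoc, hMN, Matrix.mul_one]
  have hK : ∀ c : DualNumber F, !![(1 : DualNumber F), c; 0, 1] * !![0, 1; -1, 0]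
      = !![-c, 1; -1, 0] := by
    intro c; rw [Matrix.mul_fin_two]; norm_num
  constructor
  · rintro ⟨c, hc⟩
    rw [hK c, key] at hc
    have e00 := congrFun (congrFun hc 0) 0
    have e01 := congrFun (congrFun hc 0) 1
    have e10 := congrFun (congrFun hc 1) 0
    have e11 := congrFun (congrFun hc 1) 1
    simp only [Matrix.map_apply, Matrix.mul_apply, Fin.sum_univ_two] at e00 e01 e10 e11
    norm_num at e00 e01 e10 e11
    refine ⟨M 1 0, M 1 1, ?_, ?_⟩
    · refine Matrix.ext fun i j => ?_
      fin_cases i <;> fin_cases j <;> norm_num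
      · linear_combination e10
      · linear_combination e11
    · rw [Matrix.det_fin_two, map_sub, map_mul, map_mul, e00, e01, e10, e11]
      ring
  · rintro ⟨x, y, hM, hdet⟩
    rw [hM, Matrix.det_fin_two_of, map_sub, map_mul, map_mul, map_neg, map_neg] at hdet
    have hdet1 : M.det * N.det = 1 := by rw [← Matrix.det_mul, hMN, Matrix.det_one]
    rw [hM, Matrix.det_fin_two_of] at hdet1
    refine ⟨-(N.det * ((-x - φ (φ x)) * y - (-y - φ (φ y)) * x)), ?_⟩
    rw [hK, key, hM]
    refine Matrix.ext fun i j => ?_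
    fin_cases i <;> fin_cases j <;>
      simp only [Matrix.map_apply, Matrix.mul_apply, Fin.sum_univ_two, map_neg] <;>
      norm_num
    · linear_combination (-(-x - φ (φ x))) * hdet1 + (N.det * x) * hdet
    · linear_combination (-(-y - φ (φ y))) * hdet1 + (N.det * y) * hdet
end

section
/- Let 𝐱 = x₀ + x₁ε and 𝐲 = y₀ + y₁ε be elements of R (x₀, x₁, y₀, y₁ ∈ F). Then 𝐱·φ(𝐲) − 𝐲·φ(𝐱) is a unit of R fixed by φ if and only if x₀·y₀^q − x₀^q·y₀ ∈ 𝔽_q^× and x₁·y₀^q + x₀·y₁^q − x₀^q·y₁ − x₁^q·y₀ ∈ 𝔽_q. (This is the coordinate description of the set 𝔖 ≅ X̃ underlying the unramified Lusztig surface for GL₂(𝒪_F/π²).) -/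
/-- Coordinate description of the set `𝔖`: for `𝐱 = x₀ + x₁ε`, `𝐲 = y₀ + y₁ε`,
`𝐱φ(𝐲) − 𝐲φ(𝐱)` is a `φ`-fixed unit of `R` iff `x₀y₀^q − x₀^qy₀ ∈ 𝔽_q^×` and
`x₁y₀^q + x₀y₁^q − x₀^qy₁ − x₁^qy₀ ∈ 𝔽_q`. -/
theorem stmt10 (p : ℕ) (hp : p.Prime) (hodd : Odd p) (q : ℕ)
    (hq : ∃ n : ℕ, 0 < n ∧ q = p ^ n)
    (F : Type*) [Field F] [IsAlgClosed F] [CharP F p]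
    (x₀ x₁ y₀ y₁ : F)
    (X Y : DualNumber F)
    (hX : X = TrivSqZeroExt.inl x₀ + TrivSqZeroExt.inr x₁)
    (hY : Y = TrivSqZeroExt.inl y₀ + TrivSqZeroExt.inr y₁) :
    (IsUnit (X * frobD q Y - Y * frobD q X) ∧
        frobD q (X * frobD q Y - Y * frobD q X) = X * frobD q Y - Y * frobD q X) ↔
      ((x₀ * y₀ ^ q - x₀ ^ q * y₀) ^ q = x₀ * y₀ ^ q - x₀ ^ q * y₀ ∧
        x₀ * y₀ ^ q - x₀ ^ q * y₀ ≠ 0 ∧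
        (x₁ * y₀ ^ q + x₀ * y₁ ^ q - x₀ ^ q * y₁ - x₁ ^ q * y₀) ^ q =
          x₁ * y₀ ^ q + x₀ * y₁ ^ q - x₀ ^ q * y₁ - x₁ ^ q * y₀) := by
  subst hX hY
  set Z := ((TrivSqZeroExt.inl x₀ + TrivSqZeroExt.inr x₁ : DualNumber F) *
      frobD q (TrivSqZeroExt.inl y₀ + TrivSqZeroExt.inr y₁) -
    (TrivSqZeroExt.inl y₀ + TrivSqZeroExt.inr y₁) *
      frobD q (TrivSqZeroExt.inl x₀ + TrivSqZeroExt.inr x₁)) with hZ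
  have hfstZ : TrivSqZeroExt.fst Z = x₀ * y₀ ^ q - x₀ ^ q * y₀ := by
    simp [hZ, frobD, TrivSqZeroExt.fst_mul]
    ring
  have hsndZ : TrivSqZeroExt.snd Z =
      x₁ * y₀ ^ q + x₀ * y₁ ^ q - x₀ ^ q * y₁ - x₁ ^ q * y₀ := by
    simp [hZ, frobD, TrivSqZeroExt.snd_mul, smul_eq_mul, MulOpposite.smul_eq_mul_unop]
    ring
  have hfix : frobD q Z = Z ↔
      (TrivSqZeroExt.fst Z) ^ q = TrivSqZeroExt.fst Z ∧
      (TrivSqZeroExt.snd Z) ^ q = TrivSqZeroExt.snd Z := by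
    constructor
    · intro h
      constructor
      · have := congrArg TrivSqZeroExt.fst h
        simpa [frobD] using this
      · have := congrArg TrivSqZeroExt.snd h
        simpa [frobD] using this
    · rintro ⟨h1, h2⟩
      apply TrivSqZeroExt.ext <;> simp [frobD, h1, h2]
  rw [TrivSqZeroExt.isUnit_iff_isUnit_fst, isUnit_iff_ne_zero, hfix, hfstZ, hsndZ]
  tauto
end

section
/- Let x₀, y₀, x₁ ∈ F with x₀^{q²} = x₀ and x₀ ≠ 0, and suppose c := x₀^q·x₁ + x₀·x₁^q − y₀^{q+1} satisfies c^q = c. Then ξ := x₀^{q+1} satisfies ξ^q = ξ and ξ ≠ 0, and the elements X := x₀^q·x₁ and Y := y₀/x₀ satisfy X^q + X = ξ·Y^{q+1} + c. (This is the change of variables identifying the Lusztig curve X_D for 𝒪_D^×/U_D³ with a disjoint union of q²−1 affine curves X^{q²} − X = x₀^{q+1}(Y^{q(q+1)} − Y^{q+1}).) -/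
/-- Change of variables identifying the Lusztig curve `X_D` with the curves
`X^q + X = ξY^{q+1} + c`. -/
theorem stmt11 (p : ℕ) (hp : p.Prime) (hodd : Odd p) (q : ℕ)
    (hq : ∃ n : ℕ, 0 < n ∧ q = p ^ n)
    (F : Type*) [Field F] [IsAlgClosed F] [CharP F p]
    (x₀ y₀ x₁ : F) (hx : x₀ ^ (q ^ 2) = x₀) (hx0 : x₀ ≠ 0)
    (c : F) (hc : c = x₀ ^ q * x₁ + x₀ * x₁ ^ q - y₀ ^ (q + 1)) (hcq : c ^ q = c) :
    (x₀ ^ (q + 1)) ^ q = x₀ ^ (q + 1) ∧ x₀ ^ (q + 1) ≠ 0 ∧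
      (x₀ ^ q * x₁) ^ q + x₀ ^ q * x₁ = x₀ ^ (q + 1) * (y₀ / x₀) ^ (q + 1) + c := by
  have hxq : x₀ ^ (q * q) = x₀ := by rw [← sq]; exact hx
  refine ⟨?_, pow_ne_zero _ hx0, ?_⟩
  · rw [← pow_mul, add_mul, one_mul, pow_add, hxq, pow_add, pow_one, mul_comm]
  · have h1 : (x₀ ^ q * x₁) ^ q = x₀ * x₁ ^ q := by
      rw [mul_pow, ← pow_mul, hxq]
    rw [h1, hc, div_pow, mul_div_cancel₀ _ (pow_ne_zero (q + 1) hx0)]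
    ring
end

section
/- The set Γ₀ := {(a₀,a₁) ∈ F × F : a₀^{q+1} = 1 and a₀^q·a₁ + a₀·a₁^q = 0} is finite and has exactly q(q+1) elements. -/
open Polynomial

/-- The torus `Γ₀` for the `SL₂` case. -/
def Gamma0Set (q : ℕ) (F : Type*) [Field F] : Set (F × F) :=
  {a | a.1 ^ (q + 1) = 1 ∧ a.1 ^ q * a.2 + a.1 * a.2 ^ q = 0}

theorem stmt12 (p : ℕ) (hp : p.Prime) (hodd : Odd p) (q : ℕ)
    (hq : ∃ n : ℕ, 0 < n ∧ q = p ^ n)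
    (F : Type*) [Field F] [IsAlgClosed F] [CharP F p] :
    (Gamma0Set q F).Finite ∧ (Gamma0Set q F).ncard = q * (q + 1) := by
  classical
  obtain ⟨n, hn, rfl⟩ := hq
  set q := p ^ n with hqdef
  have hp2 : 2 ≤ p := hp.two_le
  have hq2 : 2 ≤ q := by
    calc 2 ≤ p := hp2
    _ = p ^ 1 := (pow_one p).symm
    _ ≤ p ^ n := Nat.pow_le_pow_right (by omega) hn
  have hqF : (q : F) = 0 := by
    have := CharP.cast_eq_zero F p
    simp [hqdef, Nat.cast_pow, this, zero_pow hn.ne']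
  have hq1F : ((q + 1 : ℕ) : F) ≠ 0 := by
    push_cast [hqF]; simp
  -- first polynomial
  set f : F[X] := X ^ (q + 1) - C 1 with hf
  have hfsep : f.Separable := separable_X_pow_sub_C 1 hq1F one_ne_zero
  have hfdeg : f.natDegree = q + 1 := by rw [hf, natDegree_X_pow_sub_C]
  have hfne : f ≠ 0 := by intro h; rw [h, natDegree_zero] at hfdeg; omega
  have hfcard : f.roots.toFinset.card = q + 1 := by
    rw [Multiset.toFinset_card_of_nodup (nodup_roots hfsep),
      (splits_iff_card_roots).mp (IsAlgClosed.splits f), hfdeg]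
  -- second polynomials
  have key : ∀ c : F, c ≠ 0 →
      ((X ^ q + C c * X : F[X]).roots.toFinset.card = q) := by
    intro c hc
    set g : F[X] := X ^ q + C c * X with hg
    have hgdeg : g.natDegree = q := by
      rw [hg, natDegree_add_eq_left_of_natDegree_lt, natDegree_X_pow]
      rw [natDegree_X_pow]
      calc (C c * X).natDegree ≤ 1 := by
            simpa using natDegree_mul_le.trans (by simp)
      _ < q := by omega
    have hgsep : g.Separable := by
      have hd : derivative g = C c := by
        have : ((q : F)) = 0 := hqF
        simp [hg, derivative_X_pow, this]
      exact ⟨0, C c⁻¹, by rw [hd]; simp [← C_mul, inv_mul_cancel₀ hc]⟩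
    rw [Multiset.toFinset_card_of_nodup (nodup_roots hgsep),
      (splits_iff_card_roots).mp (IsAlgClosed.splits g), hgdeg]
  -- the finset
  set G : Finset (F × F) := f.roots.toFinset.biUnion (fun a₀ =>
    ((X ^ q + C (a₀ ^ (q - 1)) * X : F[X]).roots.toFinset).image (fun a₁ => (a₀, a₁))) with hG
  have hmem : ∀ a : F × F, a ∈ Gamma0Set (q) F ↔ a ∈ G := by
    rintro ⟨a₀, a₁⟩
    have hfne' : f ≠ 0 := hfne
    constructor
    · rintro ⟨h1, h2⟩
      have ha₀ : a₀ ≠ 0 := by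
        rintro rfl; rw [zero_pow (by omega)] at h1; exact one_ne_zero h1.symm
      have hgne : (X ^ q + C (a₀ ^ (q - 1)) * X : F[X]) ≠ 0 := by
        intro h
        have := congrArg natDegree h
        rw [natDegree_add_eq_left_of_natDegree_lt, natDegree_X_pow] at this
        · simp at this; omega
        · rw [natDegree_X_pow]
          calc (C (a₀ ^ (q-1)) * X).natDegree ≤ 1 := by
                simpa using natDegree_mul_le.trans (by simp)
          _ < q := by omega
      refine Finset.mem_biUnion.mpr ⟨a₀, ?_, Finset.mem_image.mpr ⟨a₁, ?_, rfl⟩⟩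
      · rw [Multiset.mem_toFinset, mem_roots hfne']
        simp [hf, sub_eq_zero, h1]
      · rw [Multiset.mem_toFinset, mem_roots hgne]
        have : a₀ * (a₁ ^ q + a₀ ^ (q - 1) * a₁) = a₀ ^ q * a₁ + a₀ * a₁ ^ q := by
          rw [mul_add, ← mul_assoc, ← pow_succ']
          have : q - 1 + 1 = q := by omega
          ring_nf
          rw  [mul_comm a₀ (a₀ ^ (q-1)), ← pow_succ, this]
          ring
        have h3 : a₁ ^ q + a₀ ^ (q - 1) * a₁ = 0 := by
          have := this.trans h2
          exact (mul_eq_zero.mp this).resolve_left ha₀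
        simp [IsRoot, h3]
    · intro h
      obtain ⟨a₀', ha₀', hmem⟩ := Finset.mem_biUnion.mp h
      obtain ⟨a₁', ha₁', heq⟩ := Finset.mem_image.mp hmem
      obtain ⟨rfl, rfl⟩ := Prod.mk.injEq .. ▸ (Prod.ext_iff.mp heq.symm)
      rw [Multiset.mem_toFinset, mem_roots hfne'] at ha₀'
      have h1 : a₀ ^ (q + 1) = 1 := by
        have := ha₀'; simp [hf, IsRoot, sub_eq_zero] at this; exact this
      have ha₀ : a₀ ≠ 0 := by
        rintro rfl; rw [zero_pow (by omega)] at h1; exact one_ne_zero h1.symm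
      rw [Multiset.mem_toFinset] at ha₁'
      have h3 : a₁ ^ q + a₀ ^ (q - 1) * a₁ = 0 := by
        have := (mem_roots (by
          intro hzz
          exact absurd (hzz ▸ ha₁') (by simp)) ).mp ha₁'
        simpa [IsRoot] using this
      refine ⟨h1, ?_⟩
      have : a₀ ^ q * a₁ + a₀ * a₁ ^ q = a₀ * (a₁ ^ q + a₀ ^ (q - 1) * a₁) := by
        rw [mul_add, ← mul_assoc, ← pow_succ']
        have hq1 : q - 1 + 1 = q := by omega
        ring_nf
        rw [mul_comm a₀ (a₀ ^ (q-1)), ← pow_succ, hq1]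
        ring
      rw [this, h3, mul_zero]
  have hset : Gamma0Set q F = ↑G := Set.ext fun a => by rw [hmem a, Finset.mem_coe]
  rw [hset]
  refine ⟨G.finite_toSet, ?_⟩
  rw [Set.ncard_coe_finset]
  rw [hG, Finset.card_biUnion]
  · rw [Finset.sum_congr rfl (fun a₀ ha₀ => ?_)]
    · rw [Finset.sum_const, hfcard, smul_eq_mul, mul_comm]
    · rw [Finset.card_image_of_injective _ (fun x y h => by simpa using h)]
      apply key
      rw [Multiset.mem_toFinset, mem_roots hfne] at ha₀
      have h1 : a₀ ^ (q + 1) = 1 := by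
        simpa [hf, IsRoot, sub_eq_zero] using ha₀
      have ha₀0 : a₀ ≠ 0 := by
        rintro rfl; rw [zero_pow (by omega)] at h1; exact one_ne_zero h1.symm
      exact pow_ne_zero _ ha₀0
  · intro x _ y _ hxy
    simp only [Finset.disjoint_left, Finset.mem_image]
    rintro a ⟨a₁, _, rfl⟩ ⟨a₂, _, h⟩
    exact hxy (by simpa using (Prod.ext_iff.mp h.symm).1)
end

section
/- The set 𝔖₀₀^{SL} := {(x₀,y₀) ∈ F × F : x₀·y₀^q − x₀^q·y₀ = 1, x₀^{q²−1} = −1 and y₀^{q²−1} = −1} is finite and has exactly q(q²−1) elements (the same as the order of SL₂(𝔽_q)). -/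
/-!
The condition on `y` is redundant: raising `x y^q - x^q y = 1` to the `q`-th power (Frobenius)
and using `x^(q²) = -x` gives `x^q (y^(q²) + y) = 0`. So the set fibres over the `q² - 1` roots
of `X^(q²-1) + 1`, which is separable since `p ∤ q² - 1`, and the fibre over `x` is the root set
of `x Y^q - x^q Y - 1`, which is separable of degree `q` because its derivative is the nonzero
constant `-x^q`.
-/

open Polynomial

/-- The set `𝔖₀₀` for the `SL₂` case. -/
def S00SL (q : ℕ) (F : Type*) [Field F] : Set (F × F) :=
  {xy | xy.1 * xy.2 ^ q - xy.1 ^ q * xy.2 = 1 ∧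
    xy.1 ^ (q ^ 2 - 1) = -1 ∧ xy.2 ^ (q ^ 2 - 1) = -1}

theorem Set.finite_and_ncard_eq_of_mem_iff {α β : Type*} {s : Set (α × β)} (A : Finset α)
    (B : α → Finset β) {k : ℕ} (hs : ∀ a b, (a, b) ∈ s ↔ a ∈ A ∧ b ∈ B a)
    (hB : ∀ a ∈ A, (B a).card = k) :
    s.Finite ∧ s.ncard = A.card * k := by
  have : s = (A.sigma B).map (Equiv.sigmaEquivProd α β).toEmbedding := by
    ext ⟨a, b⟩
    simp [hs]
  subst this
  exact ⟨Finset.finite_toSet _, by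
    rw [ncard_coe_finset, Finset.card_map, Finset.card_sigma, Finset.sum_const_nat hB]⟩

section IsAlgClosed

variable {K : Type*} [Field K] [IsAlgClosed K] [DecidableEq K]

theorem Polynomial.card_roots_toFinset_of_separable {f : K[X]} (hf : f.Separable) :
    f.roots.toFinset.card = f.natDegree := by
  rw [Multiset.toFinset_card_of_nodup (nodup_roots hf), IsAlgClosed.card_roots_eq_natDegree]

theorem Polynomial.card_nthRootsFinset_of_isAlgClosed {n : ℕ} {a : K} (hn : (n : K) ≠ 0)
    (ha : a ≠ 0) : (nthRootsFinset n a).card = n := by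
  rw [nthRootsFinset_def, nthRoots, card_roots_toFinset_of_separable
    (separable_X_pow_sub_C a hn ha), natDegree_X_pow_sub_C]

end IsAlgClosed

section AffineAdditive

variable {K : Type*} [Field K] {q : ℕ} {a b c : K}

theorem Polynomial.mem_roots_C_mul_X_pow_sub_C_mul_X_sub_C (hq : q ≠ 0) (hc : c ≠ 0) {y : K} :
    y ∈ (C a * X ^ q - C b * X - C c).roots ↔ a * y ^ q - b * y = c := by
  have eval_eq (z : K) : (C a * X ^ q - C b * X - C c).eval z = a * z ^ q - b * z - c := by
    simp only [eval_sub, eval_mul, eval_pow, eval_C, eval_X]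
  have hne : C a * X ^ q - C b * X - C c ≠ 0 := fun h => by
    simpa [zero_pow hq, hc] using (eval_eq 0).symm.trans (congrArg (eval 0) h)
  rw [mem_roots hne, IsRoot, eval_eq, sub_eq_zero]

theorem Polynomial.natDegree_C_mul_X_pow_sub_C_mul_X_sub_C (hq : 2 ≤ q) (ha : a ≠ 0) :
    (C a * X ^ q - C b * X - C c).natDegree = q := by
  rw [natDegree_sub_C, natDegree_sub_eq_left_of_natDegree_lt] <;>
    rw [natDegree_C_mul_X_pow q a ha]
  exact (natDegree_C_mul_le b X).trans natDegree_X_le |>.trans_lt (by omega)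

theorem Polynomial.separable_C_mul_X_pow_sub_C_mul_X_sub_C (hq : (q : K) = 0) (hb : b ≠ 0) :
    (C a * X ^ q - C b * X - C c).Separable := by
  have hderiv : derivative (C a * X ^ q - C b * X - C c) = C (-b) := by
    simp [derivative_X_pow, hq]
  rw [Separable, hderiv]
  have hunit : IsUnit (C (-b)) := isUnit_C.2 (neg_ne_zero.2 hb).isUnit
  simpa using (isCoprime_mul_unit_right_right hunit _ 1).2 isCoprime_one_right

variable [IsAlgClosed K] [DecidableEq K]

theorem Polynomial.card_roots_toFinset_C_mul_X_pow_sub_C_mul_X_sub_C (hqK : (q : K) = 0)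
    (hq : 2 ≤ q) (ha : a ≠ 0) (hb : b ≠ 0) :
    (C a * X ^ q - C b * X - C c).roots.toFinset.card = q := by
  rw [card_roots_toFinset_of_separable (separable_C_mul_X_pow_sub_C_mul_X_sub_C hqK hb),
    natDegree_C_mul_X_pow_sub_C_mul_X_sub_C hq ha]

end AffineAdditive

section S00SL

variable {F : Type*} [Field F]

theorem ne_zero_of_mul_pow_sub_pow_mul_eq_one {q : ℕ} (hq : q ≠ 0) {x y : F}
    (h : x * y ^ q - x ^ q * y = 1) : x ≠ 0 ∧ y ≠ 0 := by
  constructor <;> rintro rfl <;> simp [zero_pow hq] at h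

theorem pow_sub_one_eq_neg_one_iff {m : ℕ} (hm : m ≠ 0) {x : F} (hx : x ≠ 0) :
    x ^ (m - 1) = -1 ↔ x ^ m = -x := by
  conv_rhs => rw [← Nat.sub_add_cancel (Nat.one_le_iff_ne_zero.2 hm), pow_succ, ← neg_one_mul x]
  exact (mul_left_injective₀ hx).eq_iff.symm

theorem pow_sq_eq_neg_of_mul_pow_sub_pow_mul_eq_one {p n : ℕ} [ExpChar F p] {x y : F}
    (hx : x ^ (p ^ n) ^ 2 = -x) (hxy : x * y ^ p ^ n - x ^ p ^ n * y = 1) :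
    y ^ (p ^ n) ^ 2 = -y := by
  have hfrob : x ^ p ^ n * y ^ (p ^ n) ^ 2 - x ^ (p ^ n) ^ 2 * y ^ p ^ n = 1 := by
    rw [← one_pow (p ^ n), ← hxy, sub_pow_expChar_pow]
    ring
  have hx0 := (ne_zero_of_mul_pow_sub_pow_mul_eq_one (expChar_pow_pos F p n).ne' hxy).1
  have : x ^ p ^ n * (y ^ (p ^ n) ^ 2 + y) = 0 := by
    linear_combination hfrob - hxy + y ^ p ^ n * hx
  exact eq_neg_of_add_eq_zero_left ((mul_eq_zero.1 this).resolve_left (pow_ne_zero _ hx0))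

theorem mk_mem_S00SL_iff [DecidableEq F] {p n : ℕ} [ExpChar F p] (hq : 2 ≤ p ^ n) {x y : F} :
    (x, y) ∈ S00SL (p ^ n) F ↔ x ∈ nthRootsFinset ((p ^ n) ^ 2 - 1) (-1 : F) ∧
      y ∈ (C x * X ^ p ^ n - C (x ^ p ^ n) * X - C 1).roots.toFinset := by
  have hq2 : (p ^ n) ^ 2 ≠ 0 := by positivity
  have hq2' : 0 < (p ^ n) ^ 2 - 1 := Nat.sub_pos_of_lt (Nat.one_lt_pow two_ne_zero hq)
  simp only [S00SL, Set.mem_ofPred_eq, Multiset.mem_toFinset, mem_nthRootsFinset hq2',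
    mem_roots_C_mul_X_pow_sub_C_mul_X_sub_C (by omega : p ^ n ≠ 0) one_ne_zero]
  constructor
  · rintro ⟨hxy, hx, -⟩
    exact ⟨hx, hxy⟩
  · rintro ⟨hx, hxy⟩
    obtain ⟨hx0, hy0⟩ := ne_zero_of_mul_pow_sub_pow_mul_eq_one (by omega) hxy
    refine ⟨hxy, hx, (pow_sub_one_eq_neg_one_iff hq2 hy0).2 ?_⟩
    exact pow_sq_eq_neg_of_mul_pow_sub_pow_mul_eq_one ((pow_sub_one_eq_neg_one_iff hq2 hx0).1 hx) hxy

end S00SL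

theorem stmt13_general (p : ℕ) (hp : p.Prime) (q : ℕ)
    (hq : ∃ n : ℕ, 0 < n ∧ q = p ^ n)
    (F : Type*) [Field F] [IsAlgClosed F] [CharP F p] :
    (S00SL q F).Finite ∧ (S00SL q F).ncard = q * (q ^ 2 - 1) := by
  obtain ⟨n, hn, rfl⟩ := hq
  have := ExpChar.prime (R := F) hp
  classical
  have hq : 2 ≤ p ^ n := Nat.one_lt_pow hn.ne' hp.one_lt
  have hqF : ((p ^ n : ℕ) : F) = 0 := by rw [Nat.cast_pow, CharP.cast_eq_zero, zero_pow hn.ne']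
  have hm : (((p ^ n) ^ 2 - 1 : ℕ) : F) ≠ 0 := by
    rw [Nat.cast_sub (Nat.one_le_pow _ _ (by omega)), Nat.cast_pow, hqF]
    norm_num
  have hfiber (x : F) (hx : x ∈ nthRootsFinset ((p ^ n) ^ 2 - 1) (-1 : F)) :
      (C x * X ^ p ^ n - C (x ^ p ^ n) * X - C 1).roots.toFinset.card = p ^ n := by
    have hx0 := ne_zero_of_mem_nthRootsFinset (neg_ne_zero.2 one_ne_zero) hx
    exact card_roots_toFinset_C_mul_X_pow_sub_C_mul_X_sub_C hqF hq hx0 (pow_ne_zero _ hx0)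
  have hS := Set.finite_and_ncard_eq_of_mem_iff _ _ (fun _ _ => mk_mem_S00SL_iff hq) hfiber
  rwa [card_nthRootsFinset_of_isAlgClosed hm (neg_ne_zero.2 one_ne_zero), mul_comm] at hS

theorem stmt13 (p : ℕ) (hp : p.Prime) (hodd : Odd p) (q : ℕ)
    (hq : ∃ n : ℕ, 0 < n ∧ q = p ^ n)
    (F : Type*) [Field F] [IsAlgClosed F] [CharP F p] :
    (S00SL q F).Finite ∧ (S00SL q F).ncard = q * (q ^ 2 - 1) :=
  stmt13_general p hp q hq F
end

section
/- The number of strongly primitive characters of Γ is q(q−1)(q²−1); no strongly primitive character w satisfies w∘σ = w; and consequently the number of orbits of the Frobenius action w ↦ w∘σ on the set of strongly primitive characters of Γ equals q(q−1)(q²−1)/2. -/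
/-- A character of the group `Γ = K^× × K` (the second factor additive), encoded as a
multiplicative function `(Kˣ × K) → ℂˣ`. -/
def IsChar {K : Type*} [Field K] (w : Kˣ × K → ℂˣ) : Prop :=
  ∀ (a b : Kˣ) (x y : K), w (a * b, x + y) = w (a, x) * w (b, y)

/-- A character `w` of `Γ = K^× × K` is strongly primitive if the additive character
`ψ(x) = w(1, x)` of `K` does not factor as `η ∘ Tr` for a homomorphism
`η : (K₀, +) → ℂ^×` on the subfield `K₀ = {x : x^q = x}`, where `Tr x = x + x^q`. -/
def StronglyPrimitive (q : ℕ) {K : Type*} [Field K] (w : Kˣ × K → ℂˣ) : Prop :=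
  IsChar w ∧
    ¬∃ η : K → ℂˣ, (∀ x y : K, x ^ q = x → y ^ q = y → η (x + y) = η x * η y) ∧
      ∀ x : K, w (1, x) = η (x + x ^ q)

/-!
Let `φ x = x ^ q` be the Frobenius of `K` over `K₀`, an additive involution, and `Tr = 1 + φ`.
The kernels of `φ - 1` and `Tr` are root sets of polynomials of degree `q`, so the product of their
orders is at most `q² = |K|`; since `Tr ∘ (φ - 1) = (φ - 1) ∘ Tr = 0`, counting then forces
`Tr K = K₀` and `ker Tr = (φ - 1) K`, of order `q`. Consequently an additive character `ψ` factors
through `Tr` iff it is trivial on `ker Tr`, and a character `χ ⊗ ψ` of `Γ` is strongly primitive iff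
`ψ` is nontrivial on `ker Tr`: there are `(q² - 1)(q² - q)` of them. A Frobenius-fixed character
has `ψ (x ^ q - x) = 1` for all `x`, i.e. is trivial on `ker Tr`; so the Frobenius acts freely on
strongly primitive characters and its orbits are pairs.
-/

open Finset in
theorem Finset.card_image_pair_mul_two {α : Type*} [DecidableEq α] {S : Finset α} {m : α → α}
    (hm : ∀ a, m (m a) = a) (hmS : ∀ a ∈ S, m a ∈ S) (hfix : ∀ a ∈ S, m a ≠ a) :
    #(S.image fun a ↦ ({a, m a} : Set α)) * 2 = #S := by
  rw [card_eq_sum_card_image (fun a ↦ ({a, m a} : Set α)) S, ← smul_eq_mul, ← sum_const]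
  refine sum_congr rfl fun _ hb ↦ ?_
  obtain ⟨a, ha, rfl⟩ := mem_image.mp hb
  have hfiber : {x ∈ S | ({x, m x} : Set α) = {a, m a}} = {a, m a} := by
    ext x
    simp only [mem_filter, mem_insert, mem_singleton, Set.pair_eq_pair_iff]
    constructor
    · rintro ⟨-, ⟨rfl, -⟩ | ⟨rfl, -⟩⟩ <;> simp
    · rintro (rfl | rfl)
      · exact ⟨ha, by simp⟩
      · exact ⟨hmS a ha, by simp [hm]⟩
  rw [hfiber, card_pair (hfix a ha).symm]

theorem Set.ncard_setOf_exists_eq_pair_mul_two {α : Type*} {S : Set α} (hS : S.Finite)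
    {m : α → α} (hm : ∀ a, m (m a) = a) (hmS : ∀ a ∈ S, m a ∈ S) (hfix : ∀ a ∈ S, m a ≠ a) :
    {s : Set α | ∃ a ∈ S, s = {a, m a}}.ncard * 2 = S.ncard := by
  classical
  have hset : {s : Set α | ∃ a ∈ S, s = {a, m a}} =
      ↑(hS.toFinset.image fun a ↦ ({a, m a} : Set α)) := by
    ext s
    simp [eq_comm]
  rw [hset, Set.ncard_coe_finset, Set.ncard_eq_toFinset_card S hS]
  exact Finset.card_image_pair_mul_two hm (by simpa using hmS) (by simpa using hfix)

theorem AddMonoidHom.range_eq_ker_of_card_ker_mul_card_ker_le {A B C : Type*} [AddGroup A]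
    [AddGroup B] [AddGroup C] [Finite A] [Finite B] {f : A →+ B} {g : B →+ C}
    (hgf : g.comp f = 0) (hcard : Nat.card f.ker * Nat.card g.ker ≤ Nat.card A) :
    f.range = g.ker := by
  have hle : f.range ≤ g.ker := by
    rintro _ ⟨a, rfl⟩
    exact DFunLike.congr_fun hgf a
  refine AddSubgroup.eq_of_le_of_card_ge hle
    (Nat.le_of_mul_le_mul_left ?_ (Nat.card_pos (α := f.ker)))
  rwa [← AddSubgroup.index_ker, AddSubgroup.card_mul_index]

theorem AddMonoidHom.range_sub_id_eq_ker_id_add_of_involutive {A : Type*} [AddCommGroup A]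
    [Finite A] {φ : A →+ A} (hφ : ∀ x, φ (φ x) = x)
    (hcard : Nat.card (φ - .id A).ker * Nat.card (.id A + φ).ker ≤ Nat.card A) :
    (φ - .id A).range = (.id A + φ).ker ∧ (.id A + φ).range = (φ - .id A).ker := by
  constructor
  · refine range_eq_ker_of_card_ker_mul_card_ker_le ?_ hcard
    ext x
    simp only [comp_apply, add_apply, sub_apply, id_apply, map_sub, hφ, zero_apply]
    abel
  · refine range_eq_ker_of_card_ker_mul_card_ker_le ?_ (by rwa [mul_comm])
    ext x
    simp only [comp_apply, add_apply, sub_apply, id_apply, map_add, hφ, zero_apply]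
    abel

open Polynomial Finset in
theorem ncard_setOf_pow_eq_mul_le {R : Type*} [CommRing R] [IsDomain R] {q : ℕ} (hq : 2 ≤ q)
    (c : R) : {x : R | x ^ q = c * x}.ncard ≤ q := by
  classical
  set p : R[X] := X ^ q - C c * X
  have hdeg : (C c * X).natDegree < q :=
    ((natDegree_C_mul_le c X).trans natDegree_X_le).trans_lt (by omega)
  have hp : p.natDegree = q := by
    rw [natDegree_sub_eq_left_of_natDegree_lt (by rwa [natDegree_X_pow]), natDegree_X_pow]
  have hp0 : p ≠ 0 := fun h ↦ by simp [h] at hp; omega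
  have hsub : {x : R | x ^ q = c * x} ⊆ p.roots.toFinset := fun x hx ↦ by
    simp_all [p, sub_eq_zero]
  calc _ ≤ #p.roots.toFinset := (Set.ncard_le_ncard hsub).trans (Set.ncard_coe_finset _).le
    _ ≤ p.natDegree := card_le_degree_of_subset_roots (Multiset.dedup_subset _)
    _ = q := hp

theorem exists_eq_comp_iff_forall_mem_ker {A B M : Type*} [AddGroup A] [AddGroup B] [Group M]
    (T : A →+ B) {S : Set B} (hS : (T.range : Set B) = S) {ψ : A → M}
    (hψ : ∀ x y, ψ (x + y) = ψ x * ψ y) :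
    (∃ η : B → M, (∀ x y, x ∈ S → y ∈ S → η (x + y) = η x * η y) ∧ ∀ a, ψ a = η (T a)) ↔
      ∀ z ∈ T.ker, ψ z = 1 := by
  constructor
  · rintro ⟨η, hη, hψη⟩ z hz
    have h0 : (0 : B) ∈ S := hS ▸ T.range.zero_mem
    have hη0 : η 0 = 1 := by simpa using hη 0 0 h0 h0
    rw [hψη, T.mem_ker.mp hz, hη0]
  · intro htriv
    have hfac : Function.FactorsThrough ψ T := fun a b hab ↦ by
      have h1 : ψ (a - b) = 1 := htriv _ (by simp [hab])
      rw [← sub_add_cancel a b, hψ, h1, one_mul]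
    refine ⟨Function.extend T ψ 1, ?_, fun a ↦ (hfac.extend_apply 1 a).symm⟩
    rw [← hS]
    rintro _ _ ⟨a, rfl⟩ ⟨b, rfl⟩
    rw [← map_add, hfac.extend_apply, hfac.extend_apply, hfac.extend_apply, hψ]

instance {G : Type*} [CommGroup G] [Finite G] : Finite (G →* ℂˣ) :=
  Nat.finite_of_card_ne_zero <| by
    rw [CommGroup.card_monoidHom_of_hasEnoughRootsOfUnity]
    exact Nat.card_pos.ne'

theorem ncard_setOf_exists_mem_apply_ne_one {G : Type*} [CommGroup G] [Finite G]
    (H : Subgroup G) :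
    {χ : G →* ℂˣ | ∃ h ∈ H, χ h ≠ 1}.ncard = Nat.card G - Nat.card (G ⧸ H) := by
  have hset : {χ : G →* ℂˣ | ∃ h ∈ H, χ h ≠ 1} =
      ((MonoidHom.domRestrictHom H ℂˣ).ker : Set (G →* ℂˣ))ᶜ := by
    ext χ
    simp
  rw [hset, Set.ncard_compl, ← Nat.card_coe_set_eq, SetLike.coe_sort_coe,
    CommGroup.card_domRestrictHom_ker, CommGroup.card_monoidHom_of_hasEnoughRootsOfUnity]

section FrobeniusTrace

variable {K : Type*} [Field K] {q : ℕ} {φ : K →+ K}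

theorem card_ker_frobenius_sub_id_le (hq : 2 ≤ q) (hφ : ∀ x, φ x = x ^ q) :
    Nat.card (φ - .id K).ker ≤ q := by
  rw [← SetLike.coe_sort_coe, Nat.card_coe_set_eq]
  convert ncard_setOf_pow_eq_mul_le hq (1 : K) using 2
  ext x
  simp [hφ, sub_eq_zero]

theorem card_ker_trace_le (hq : 2 ≤ q) (hφ : ∀ x, φ x = x ^ q) :
    Nat.card (.id K + φ).ker ≤ q := by
  rw [← SetLike.coe_sort_coe, Nat.card_coe_set_eq]
  convert ncard_setOf_pow_eq_mul_le hq (-1 : K) using 2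
  ext x
  simp [hφ, add_eq_zero_iff_eq_neg']

variable [Fintype K]

theorem exists_addMonoidHom_apply_eq_pow (hq : IsPrimePow q) (hK : Fintype.card K = q ^ 2) :
    ∃ φ : K →+ K, ∀ x, φ x = x ^ q := by
  obtain ⟨p, n, hp, -, rfl⟩ := hq
  have := Fact.mk hp.nat_prime
  have : CharP K p := charP_of_card_eq_prime_pow (f := n * 2) (by rw [hK, pow_mul])
  exact ⟨(iterateFrobenius K p n).toAddMonoidHom, iterateFrobenius_def p n⟩

theorem pow_pow_eq_self_of_card_eq_sq (hK : Fintype.card K = q ^ 2) (x : K) :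
    (x ^ q) ^ q = x := by
  rw [← pow_mul, ← sq, ← hK, FiniteField.pow_card]

theorem range_frobenius_sub_id_eq_ker_trace (hq : 2 ≤ q) (hK : Fintype.card K = q ^ 2)
    (hφ : ∀ x, φ x = x ^ q) :
    (φ - .id K).range = (.id K + φ).ker ∧ (.id K + φ).range = (φ - .id K).ker :=
  AddMonoidHom.range_sub_id_eq_ker_id_add_of_involutive
    (fun x ↦ by rw [hφ, hφ, pow_pow_eq_self_of_card_eq_sq hK])
    (by
      rw [Nat.card_eq_fintype_card (α := K), hK, sq]
      exact Nat.mul_le_mul (card_ker_frobenius_sub_id_le hq hφ) (card_ker_trace_le hq hφ))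

theorem card_ker_trace (hq : 2 ≤ q) (hK : Fintype.card K = q ^ 2) (hφ : ∀ x, φ x = x ^ q) :
    Nat.card (.id K + φ).ker = q := by
  have hprod := (.id K + φ).ker.card_mul_index
  rw [AddSubgroup.index_ker, (range_frobenius_sub_id_eq_ker_trace hq hK hφ).2,
    Nat.card_eq_fintype_card (α := K), hK] at hprod
  nlinarith [card_ker_frobenius_sub_id_le hq hφ, card_ker_trace_le hq hφ]

end FrobeniusTrace

section Characters

variable {K : Type*} [Field K]

def prodChar (χ : Kˣ →* ℂˣ) (ψ : Multiplicative K →* ℂˣ) : Kˣ × K → ℂˣ :=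
  fun g ↦ χ g.1 * ψ (.ofAdd g.2)

theorem prodChar_injective : Function.Injective (Function.uncurry (prodChar (K := K))) := by
  rintro ⟨χ₁, ψ₁⟩ ⟨χ₂, ψ₂⟩ h
  have h1 : ∀ a, χ₁ a = χ₂ a := fun a ↦ by simpa [prodChar] using congrFun h (a, 0)
  have h2 : ∀ x, ψ₁ x = ψ₂ x := fun x ↦ by simpa [prodChar] using congrFun h (1, x.toAdd)
  exact Prod.ext (MonoidHom.ext h1) (MonoidHom.ext h2)

theorem isChar_iff_exists_prodChar {w : Kˣ × K → ℂˣ} :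
    IsChar w ↔ ∃ χ ψ, prodChar χ ψ = w := by
  constructor
  · intro hw
    refine ⟨MonoidHom.mk' (fun a ↦ w (a, 0)) fun a b ↦ by simpa using hw a b 0 0,
      MonoidHom.mk' (fun x ↦ w (1, x.toAdd)) fun x y ↦ by simpa using hw 1 1 x.toAdd y.toAdd, ?_⟩
    funext g
    simpa [prodChar] using (hw g.1 1 0 g.2).symm
  · rintro ⟨χ, ψ, rfl⟩ a b x y
    simp only [prodChar, map_mul, ofAdd_add]
    exact mul_mul_mul_comm _ _ _ _

end Characters

section StronglyPrimitive

variable {K : Type*} [Field K] [Fintype K] {q : ℕ} {φ : K →+ K} {w : Kˣ × K → ℂˣ}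

theorem stronglyPrimitive_iff (hq : 2 ≤ q) (hK : Fintype.card K = q ^ 2)
    (hφ : ∀ x, φ x = x ^ q) :
    StronglyPrimitive q w ↔ IsChar w ∧ ∃ z ∈ (.id K + φ).ker, w (1, z) ≠ 1 := by
  refine and_congr_right fun hw ↦ ?_
  have hψ : ∀ x y, w (1, x + y) = w (1, x) * w (1, y) := fun x y ↦ by simpa using hw 1 1 x y
  have hS : ((.id K + φ).range : Set K) = {y | y ^ q = y} := by
    rw [(range_frobenius_sub_id_eq_ker_trace hq hK hφ).2]
    ext y
    simp [hφ, sub_eq_zero]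
  have h := exists_eq_comp_iff_forall_mem_ker (.id K + φ) hS (ψ := fun x ↦ w (1, x)) hψ
  simp only [AddMonoidHom.add_apply, AddMonoidHom.id_apply, hφ, Set.mem_ofPred_eq] at h
  rw [h]
  simp only [not_forall, exists_prop, ne_eq]

theorem StronglyPrimitive.frobenius (hK : Fintype.card K = q ^ 2) (hφ : ∀ x, φ x = x ^ q)
    (hw : StronglyPrimitive q w) : StronglyPrimitive q fun g ↦ w (g.1 ^ q, g.2 ^ q) := by
  obtain ⟨hc, hnf⟩ := hw
  refine ⟨fun a b x y ↦ ?_, fun ⟨η, hη, hwη⟩ ↦ hnf ⟨η, hη, fun x ↦ ?_⟩⟩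
  · simp only [mul_pow, ← hφ, map_add]
    simpa only [hφ] using hc (a ^ q) (b ^ q) (x ^ q) (y ^ q)
  · have h := hwη (x ^ q)
    simp only [one_pow, pow_pow_eq_self_of_card_eq_sq hK] at h
    rw [h, add_comm]

theorem frobenius_comp_frobenius (hK : Fintype.card K = q ^ 2) (w : Kˣ × K → ℂˣ) :
    (fun g : Kˣ × K ↦ w ((g.1 ^ q) ^ q, (g.2 ^ q) ^ q)) = w := by
  have hunit (a : Kˣ) : (a ^ q) ^ q = a :=
    Units.ext (by simpa using pow_pow_eq_self_of_card_eq_sq hK (a : K))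
  simp only [hunit, pow_pow_eq_self_of_card_eq_sq hK]

theorem StronglyPrimitive.frobenius_ne (hq : 2 ≤ q) (hK : Fintype.card K = q ^ 2)
    (hφ : ∀ x, φ x = x ^ q) (hw : StronglyPrimitive q w) :
    (fun g : Kˣ × K ↦ w (g.1 ^ q, g.2 ^ q)) ≠ w := by
  intro hfix
  obtain ⟨hc, z, hz, hne⟩ := (stronglyPrimitive_iff hq hK hφ).mp hw
  obtain ⟨x, rfl⟩ : z ∈ (φ - .id K).range := by
    rwa [(range_frobenius_sub_id_eq_ker_trace hq hK hφ).1]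
  simp only [AddMonoidHom.sub_apply, AddMonoidHom.id_apply, hφ] at hne
  have hfix₁ : w (1, x ^ q) = w (1, x) := by simpa using congrFun hfix (1, x)
  have hsplit : w (1, x ^ q) = w (1, x ^ q - x) * w (1, x) := by
    simpa using hc 1 1 (x ^ q - x) x
  exact hne (mul_eq_right.mp (hsplit.symm.trans hfix₁))

theorem setOf_stronglyPrimitive_eq_image (hq : 2 ≤ q) (hK : Fintype.card K = q ^ 2)
    (hφ : ∀ x, φ x = x ^ q) :
    {w : Kˣ × K → ℂˣ | StronglyPrimitive q w} = Function.uncurry prodChar ''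
      (Set.univ ×ˢ {ψ | ∃ z ∈ (.id K + φ).ker.toSubgroup, ψ z ≠ 1}) := by
  ext w
  simp only [Set.mem_ofPred_eq, stronglyPrimitive_iff hq hK hφ, isChar_iff_exists_prodChar]
  constructor
  · rintro ⟨⟨χ, ψ, rfl⟩, z, hz, hne⟩
    exact ⟨(χ, ψ), ⟨trivial, .ofAdd z, hz, by simpa [prodChar] using hne⟩, rfl⟩
  · rintro ⟨⟨χ, ψ⟩, ⟨-, z, hz, hne⟩, rfl⟩
    exact ⟨⟨χ, ψ, rfl⟩, z.toAdd, hz, by simpa [prodChar] using hne⟩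

theorem ncard_setOf_stronglyPrimitive (hq : 2 ≤ q) (hK : Fintype.card K = q ^ 2)
    (hφ : ∀ x, φ x = x ^ q) :
    {w : Kˣ × K → ℂˣ | StronglyPrimitive q w}.ncard = q * (q - 1) * (q ^ 2 - 1) := by
  have hquot : Nat.card (Multiplicative K ⧸ (.id K + φ).ker.toSubgroup) = q := by
    have h := (.id K + φ).ker.toSubgroup.card_eq_card_quotient_mul_card_subgroup
    have hker : Nat.card (.id K + φ).ker.toSubgroup = q := card_ker_trace (K := K) hq hK hφ
    rw [hker, Nat.card_eq_fintype_card, Fintype.card_multiplicative, hK, sq] at h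
    exact (Nat.eq_of_mul_eq_mul_right (by omega) h).symm
  rw [setOf_stronglyPrimitive_eq_image hq hK hφ, Set.ncard_image_of_injective _ prodChar_injective,
    Set.ncard_prod, Set.ncard_univ, CommGroup.card_monoidHom_of_hasEnoughRootsOfUnity,
    ncard_setOf_exists_mem_apply_ne_one, hquot, Nat.card_units K, Nat.card_eq_fintype_card (α := K),
    Nat.card_eq_fintype_card (α := Multiplicative K), Fintype.card_multiplicative, hK,
    show q ^ 2 - q = q * (q - 1) by rw [Nat.mul_sub_one, sq]]
  ring

end StronglyPrimitive

/-- There are `q(q−1)(q²−1)` strongly primitive characters of `Γ`, none of them is fixed by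
the Frobenius `w ↦ w∘σ`, and hence there are `q(q−1)(q²−1)/2` Frobenius orbits of strongly
primitive characters. -/
theorem stmt14 (q : ℕ) (hq : IsPrimePow q)
    (K : Type*) [Field K] [Fintype K] (hK : Fintype.card K = q ^ 2) :
    {w : Kˣ × K → ℂˣ | StronglyPrimitive q w}.Finite ∧
    {w : Kˣ × K → ℂˣ | StronglyPrimitive q w}.ncard = q * (q - 1) * (q ^ 2 - 1) ∧
    (∀ w : Kˣ × K → ℂˣ, StronglyPrimitive q w →
      (fun g : Kˣ × K => w (g.1 ^ q, g.2 ^ q)) ≠ w) ∧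
    {s : Set (Kˣ × K → ℂˣ) | ∃ w : Kˣ × K → ℂˣ, StronglyPrimitive q w ∧
      s = {w, fun g : Kˣ × K => w (g.1 ^ q, g.2 ^ q)}}.ncard =
        q * (q - 1) * (q ^ 2 - 1) / 2 := by
  obtain ⟨φ, hφ⟩ := exists_addMonoidHom_apply_eq_pow hq hK
  have hq2 := hq.two_le
  have hfin : {w : Kˣ × K → ℂˣ | StronglyPrimitive q w}.Finite := by
    rw [setOf_stronglyPrimitive_eq_image hq2 hK hφ]
    exact Set.toFinite _
  have hcard := ncard_setOf_stronglyPrimitive hq2 hK hφ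
  have hfix := fun w ↦ StronglyPrimitive.frobenius_ne (w := w) hq2 hK hφ
  have horbits : {s : Set (Kˣ × K → ℂˣ) | ∃ w : Kˣ × K → ℂˣ, StronglyPrimitive q w ∧
      s = {w, fun g : Kˣ × K => w (g.1 ^ q, g.2 ^ q)}}.ncard * 2 = _ :=
    Set.ncard_setOf_exists_eq_pair_mul_two hfin (frobenius_comp_frobenius hK)
      (fun w hw ↦ hw.frobenius hK hφ) hfix
  exact ⟨hfin, hcard, hfix, by omega⟩
end

section
/- Let x₀, x₁, y₀, y₁ ∈ F and let a₀, a₁, b₀, b₁, c₀, c₁, d₀, d₁ ∈ F each satisfy t^q = t. Define x₀′ = a₀x₀ + c₀y₀, x₁′ = a₁x₀ + a₀x₁ + c₁y₀ + c₀y₁, y₀′ = b₀x₀ + d₀y₀, y₁′ = b₁x₀ + b₀x₁ + d₀y₁ + d₁y₀, and set s₀ := y₀^q·x₁ − x₀^q·y₁, f := (a₁x₀ + c₁y₀)·(b₀x₀ + d₀y₀)^q − (a₀x₀ + c₀y₀)^q·(b₁x₀ + d₁y₀). Then y₀′^q·x₁′ − x₀′^q·y₁′ = (a₀d₀ − b₀c₀)·s₀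 + f. (This is the formula for the action of GL₂(𝒪_F/π²) on the coordinate s₀ of the fibers of the Lusztig surface over 𝔖₀₀.) -/
/-- Action of `GL₂(𝒪_F/π²)` on the coordinate `s₀` of the fibers of the Lusztig surface:
`y₀′^q·x₁′ − x₀′^q·y₁′ = (a₀d₀ − b₀c₀)·s₀ + f`. -/
theorem stmt17 (p : ℕ) (hp : p.Prime) (hodd : Odd p) (q : ℕ)
    (hq : ∃ n : ℕ, 0 < n ∧ q = p ^ n)
    (F : Type*) [Field F] [IsAlgClosed F] [CharP F p]
    (x₀ x₁ y₀ y₁ : F) (a₀ a₁ b₀ b₁ c₀ c₁ d₀ d₁ : F)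
    (ha₀ : a₀ ^ q = a₀) (ha₁ : a₁ ^ q = a₁) (hb₀ : b₀ ^ q = b₀) (hb₁ : b₁ ^ q = b₁)
    (hc₀ : c₀ ^ q = c₀) (hc₁ : c₁ ^ q = c₁) (hd₀ : d₀ ^ q = d₀) (hd₁ : d₁ ^ q = d₁)
    (x₀' x₁' y₀' y₁' s₀ f : F)
    (hx₀' : x₀' = a₀ * x₀ + c₀ * y₀)
    (hx₁' : x₁' = a₁ * x₀ + a₀ * x₁ + c₁ * y₀ + c₀ * y₁)
    (hy₀' : y₀' = b₀ * x₀ + d₀ * y₀)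
    (hy₁' : y₁' = b₁ * x₀ + b₀ * x₁ + d₀ * y₁ + d₁ * y₀)
    (hs₀ : s₀ = y₀ ^ q * x₁ - x₀ ^ q * y₁)
    (hf : f = (a₁ * x₀ + c₁ * y₀) * (b₀ * x₀ + d₀ * y₀) ^ q -
      (a₀ * x₀ + c₀ * y₀) ^ q * (b₁ * x₀ + d₁ * y₀)) :
    y₀' ^ q * x₁' - x₀' ^ q * y₁' = (a₀ * d₀ - b₀ * c₀) * s₀ + f := by
  obtain ⟨n, hn, rfl⟩ := hq
  haveI : ExpChar F p := ExpChar.prime hp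
  have hadd : ∀ u v : F, (u + v) ^ p ^ n = u ^ p ^ n + v ^ p ^ n := fun u v =>
    haveI := Fact.mk hp; add_pow_char_pow u v p n
  subst hx₀' hx₁' hy₀' hy₁' hs₀ hf
  rw [hadd, hadd, mul_pow, mul_pow, mul_pow, mul_pow, ha₀, hb₀, hc₀, hd₀]
  ring
end
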